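/- arXiv:1805.06077 — 7 statements merged into one kernel-verified Lean document; each statement's English description precedes it below -/
import Mathlib

section
/- The number of permutations of {1,...,n} avoiding the consecutive pattern 123 (i.e., having no index i with π(i) < π(i+1) < π(i+2)) satisfies the recurrence a(n) = n·a(n-1) - C(n,3)·a(n-3) + C(n,4)·a(n-4) - C(n,6)·a(n-6) + C(n,7)·a(n-7) - ..., i.e., a(n) = n·a(n-1) + Σ_{m≥1} [ -C(n,3m)·a(n-3m) + C(n,3m+1)·a(n-3m-1) ], with a(0)=1 and a(k)=0 for k<0. -/
/-- A word avoids the increasing consecutive pattern `1 2 ... r` if it has no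
strictly increasing factor (consecutive subword) of length `r`. -/
def AvoidsInc {α : Type*} [LT α] (r : ℕ) (w : List α) : Prop :=
  ¬ ∃ l : List α, l <:+: w ∧ l.length = r ∧ l.Chain' (· < ·)

/-- `permAvoidCount r n` is the number of permutations of `{1,...,n}` avoiding the
consecutive pattern `1 2 ... r`. -/
noncomputable def permAvoidCount (r n : ℕ) : ℕ :=
  Nat.card {π : Equiv.Perm (Fin n) // AvoidsInc r ((List.finRange n).map ⇑π)}

/-!
Call `j` a split position of a list `w` if `w.take j` is increasing and `w.drop j` has no
increasing run of length `r`. Split positions form an interval `[lo, t]`, where `t` is the length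
of the longest increasing prefix. If `lo = 0` then `w` avoids the pattern, so `1 ≤ t < r`; if
`lo > 0` then `w.drop (lo - 1)` contains an increasing run, which must start at `lo - 1`, and as
soon as `lo ≤ t` this forces `t = lo + r - 1`. Either way the coefficients `c_j = 1, -1, 0, …, 0`
(period `r`) sum to zero over `[lo, t]`. A permutation of `n ≥ 1` letters split at `j` is a choice
of the `j` prefix letters followed by an avoiding arrangement of the rest, so summing over all
permutations gives `∑ⱼ c_j C(n, j) a(n - j) = 0`; for `r = 3` this is the recurrence.
-/

namespace PermAvoid

open Finset

section Runs

variable {α : Type*} [LT α]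

/-- `w` increases strictly along the positions `a, …, b - 1`; positions past its end impose
nothing. -/
def IncOn (w : List α) (a b : ℕ) : Prop :=
  ∀ i (h : i + 1 < w.length), a ≤ i → i + 1 < b → w[i] < w[i + 1]

theorem isChain_take_drop_iff (w : List α) (a m : ℕ) :
    ((w.drop a).take m).IsChain (· < ·) ↔ IncOn w a (a + m) := by
  rw [List.isChain_iff_getElem]
  constructor
  · intro h i hi hai him
    obtain ⟨k, rfl⟩ := Nat.exists_eq_add_of_le hai
    have := h k (by simp; omega)
    simpa [Nat.add_assoc] using this
  · intro h k hk
    simp only [List.length_take, List.length_drop] at hk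
    simpa [Nat.add_assoc] using h (a + k) (by omega) (by omega) (by omega)

theorem avoidsInc_iff (r : ℕ) (w : List α) :
    AvoidsInc r w ↔ ∀ a, a + r ≤ w.length → ¬ IncOn w a (a + r) := by
  simp only [AvoidsInc, ← isChain_take_drop_iff, not_exists]
  constructor
  · intro h a ha hinc
    exact h ((w.drop a).take r)
      ⟨(List.take_prefix _ _).isInfix.trans (List.drop_suffix _ _).isInfix, by simp; omega, hinc⟩
  · rintro h l ⟨⟨u, v, rfl⟩, rfl, hl⟩
    refine h u.length (by simp) ?_
    rwa [List.append_assoc, List.drop_left, List.take_left]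

theorem avoidsInc_drop_iff (r : ℕ) {j : ℕ} {w : List α} (hj : j ≤ w.length) :
    AvoidsInc r (w.drop j) ↔ ∀ a, j ≤ a → a + r ≤ w.length → ¬ IncOn w a (a + r) := by
  simp only [avoidsInc_iff, ← isChain_take_drop_iff, List.drop_drop, List.length_drop]
  constructor
  · intro h a hja ha
    obtain ⟨k, rfl⟩ := Nat.exists_eq_add_of_le hja
    exact h k (by omega)
  · intro h k hk
    exact h (j + k) (by omega) (by omega)

theorem isChain_take_iff (w : List α) (m : ℕ) :
    (w.take m).IsChain (· < ·) ↔ IncOn w 0 m := by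
  simpa using isChain_take_drop_iff w 0 m

theorem IncOn.mono {w : List α} {a b a' b' : ℕ} (h : IncOn w a b) (ha : a ≤ a') (hb : b' ≤ b) :
    IncOn w a' b' :=
  fun i hi hai hib => h i hi (ha.trans hai) (by omega)

theorem IncOn.trans {w : List α} {a b c : ℕ} (hab : IncOn w a (b + 1)) (hbc : IncOn w b c) :
    IncOn w a c := by
  intro i hi hai hic
  rcases Nat.lt_or_ge i b with h | h
  · exact hab i hi hai (by omega)
  · exact hbc i hi h hic

theorem incOn_zero_one (w : List α) : IncOn w 0 1 :=
  fun _ _ _ h => absurd h (by omega)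

end Runs

theorem incOn_map {α β : Type*} [Preorder α] [Preorder β] (f : α ↪o β) (w : List α)
    (a b : ℕ) : IncOn (w.map f) a b ↔ IncOn w a b := by
  simp [IncOn]

theorem avoidsInc_map {α β : Type*} [Preorder α] [Preorder β] (f : α ↪o β) (r : ℕ)
    (w : List α) : AvoidsInc r (w.map f) ↔ AvoidsInc r w := by
  simp only [avoidsInc_iff, incOn_map, List.length_map]

def coeff (r j : ℕ) : ℤ := if j % r = 0 then 1 else if j % r = 1 then -1 else 0

theorem succ_mod_eq_one_iff {r : ℕ} (hr : 2 ≤ r) (m : ℕ) : (m + 1) % r = 1 ↔ m % r = 0 := by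
  rw [Nat.add_mod, Nat.one_mod_eq_one.mpr (by omega)]
  have := Nat.mod_lt m (by omega : 0 < r)
  rcases Nat.lt_or_ge (m % r + 1) r with h | h
  · rw [Nat.mod_eq_of_lt h]; omega
  · rw [show m % r + 1 = r by omega, Nat.mod_self]; omega

theorem sum_range_coeff {r : ℕ} (hr : 2 ≤ r) (m : ℕ) :
    ∑ j ∈ range m, coeff r j = if m % r = 1 then 1 else 0 := by
  induction m with
  | zero => simp
  | succ m ih =>
    rw [sum_range_succ, ih, coeff]
    simp only [succ_mod_eq_one_iff hr]
    by_cases h0 : m % r = 0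
    · simp [h0]
    · by_cases h1 : m % r = 1 <;> simp [h0, h1]

theorem sum_Ico_coeff_eq_zero {r lo t : ℕ} (hr : 2 ≤ r)
    (h : t < lo ∨ (lo = 0 ∧ 1 ≤ t ∧ t < r) ∨ t + 1 = lo + r) :
    ∑ j ∈ Ico lo (t + 1), coeff r j = 0 := by
  rcases h with h | ⟨rfl, h1, hr'⟩ | h
  · rw [Ico_eq_empty (by omega), sum_empty]
  · rw [← range_eq_Ico, sum_range_coeff hr, if_neg]
    rcases Nat.lt_or_ge (t + 1) r with h | h
    · rw [Nat.mod_eq_of_lt h]; omega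
    · rw [show t + 1 = r by omega, Nat.mod_self]; omega
  · rw [h, sum_Ico_eq_sub _ (by omega), sum_range_coeff hr, sum_range_coeff hr,
      Nat.add_mod_right, sub_self]

theorem split_interval_cases {α : Type*} [LT α] {r t lo : ℕ} {w : List α} (hw : w ≠ [])
    (ht : ∀ j ≤ w.length, IncOn w 0 j ↔ j ≤ t) (htn : t ≤ w.length)
    (hlo : ∀ j, (∀ a, j ≤ a → a + r ≤ w.length → ¬ IncOn w a (a + r)) ↔ lo ≤ j) :
    t < lo ∨ (lo = 0 ∧ 1 ≤ t ∧ t < r) ∨ t + 1 = lo + r := by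
  have hfree := (hlo lo).mpr le_rfl
  rcases Nat.lt_or_ge t lo with h | hlo_t
  · exact Or.inl h
  rcases Nat.eq_zero_or_pos lo with rfl | hpos
  · refine Or.inr (Or.inl ⟨rfl, (ht 1 (List.length_pos_iff.mpr hw)).mp (incOn_zero_one w), ?_⟩)
    by_contra! hrt
    exact hfree 0 le_rfl (by omega) (by simpa using (ht r (by omega)).mpr hrt)
  · -- the increasing run that `w.drop (lo - 1)` contains has to start at `lo - 1`
    obtain ⟨a, ha, har, hrun⟩ : ∃ a, lo - 1 ≤ a ∧ a + r ≤ w.length ∧ IncOn w a (a + r) := by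
      simpa using mt (hlo (lo - 1)).mp (by omega)
    obtain rfl : a = lo - 1 := by
      by_contra hne
      exact hfree a (by omega) har hrun
    have h1 : lo - 1 + r ≤ t :=
      (ht _ har).mp ((((ht t htn).mpr le_rfl).mono le_rfl (by omega)).trans hrun)
    have h2 : t ≤ lo - 1 + r := by
      by_contra! h
      exact hfree lo le_rfl (by omega) (((ht t htn).mpr le_rfl).mono (by omega) (by omega))
    exact Or.inr (Or.inr (by omega))

open Classical in
theorem sum_coeff_split_eq_zero {α : Type*} [LT α] [DecidableLT α] {r : ℕ} (hr : 2 ≤ r)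
    {w : List α} (hw : w ≠ []) :
    ∑ j ∈ range (w.length + 1),
      (if (w.take j).IsChain (· < ·) ∧ AvoidsInc r (w.drop j) then coeff r j else 0) = 0 := by
  set n := w.length
  have hn : 1 ≤ n := List.length_pos_iff.mpr hw
  set t := Nat.findGreatest (IncOn w 0) n
  have htn : t ≤ n := Nat.findGreatest_le n
  have ht : ∀ j ≤ n, IncOn w 0 j ↔ j ≤ t := fun j hj =>
    ⟨Nat.le_findGreatest hj, (Nat.findGreatest_spec hn (incOn_zero_one w)).mono le_rfl⟩
  have hQ : ∃ j, ∀ a, j ≤ a → a + r ≤ n → ¬ IncOn w a (a + r) :=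
    ⟨n, fun a ha har => absurd har (by omega)⟩
  set lo := Nat.find hQ
  have hlo : ∀ j, (∀ a, j ≤ a → a + r ≤ n → ¬ IncOn w a (a + r)) ↔ lo ≤ j := fun j =>
    ⟨Nat.find_min' hQ, fun h a ha => Nat.find_spec hQ a (h.trans ha)⟩
  have hsplit : ∀ j ∈ range (n + 1),
      ((w.take j).IsChain (· < ·) ∧ AvoidsInc r (w.drop j)) ↔ j ∈ Ico lo (t + 1) := by
    intro j hj
    have hjn : j ≤ n := Nat.lt_succ_iff.mp (mem_range.mp hj)
    rw [isChain_take_iff, avoidsInc_drop_iff r hjn, ht j hjn, hlo, mem_Ico, Nat.lt_succ_iff,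
      and_comm]
  rw [sum_congr rfl fun j hj => if_congr (hsplit j hj) rfl rfl, sum_ite_mem,
    inter_eq_right.mpr (range_eq_Ico (n + 1) ▸ Ico_subset_Ico (Nat.zero_le lo) (by omega))]
  exact sum_Ico_coeff_eq_zero hr (split_interval_cases hw ht htn hlo)

section Arrangements

variable {α : Type*}

def arrangements (s : Finset α) : Finset (List α) :=
  ⟨Multiset.lists s.val, Multiset.lists_nodup_finset s⟩

theorem mem_arrangements {s : Finset α} {w : List α} :
    w ∈ arrangements s ↔ (w : Multiset α) = s.val :=
  (Multiset.mem_lists_iff _ _).trans eq_comm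

theorem nodup_of_mem_arrangements {s : Finset α} {w : List α} (hw : w ∈ arrangements s) :
    w.Nodup := by
  have := s.nodup
  rwa [← mem_arrangements.mp hw, Multiset.coe_nodup] at this

theorem length_of_mem_arrangements {s : Finset α} {w : List α} (hw : w ∈ arrangements s) :
    w.length = s.card := by
  rw [← Multiset.coe_card, mem_arrangements.mp hw, Finset.card_val]

end Arrangements

section Counting

open Classical

theorem card_filter_avoidsInc_arrangements_map {α β : Type*} [LinearOrder α] [LinearOrder β]
    (f : α ↪o β) (r : ℕ) (s : Finset α) :
    #((arrangements (s.map f.toEmbedding)).filter (AvoidsInc r)) =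
      #((arrangements s).filter (AvoidsInc r)) := by
  symm
  refine card_bij (fun w _ => w.map f) (fun w hw => ?_)
    (fun w _ v _ h => List.map_injective_iff.mpr f.injective h) (fun v hv => ?_)
  · rw [mem_filter, mem_arrangements] at hw ⊢
    rw [avoidsInc_map, map_val, ← hw.1]
    exact ⟨rfl, hw.2⟩
  · rw [mem_filter, mem_arrangements, map_val] at hv
    obtain ⟨w, rfl⟩ : v ∈ Set.range (List.map f) := by
      rw [Set.range_list_map]
      intro x hx
      have : x ∈ Multiset.map f s.val := hv.1 ▸ hx
      obtain ⟨a, -, rfl⟩ := Multiset.mem_map.mp this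
      exact ⟨a, rfl⟩
    refine ⟨w, mem_filter.mpr ⟨mem_arrangements.mpr ?_, (avoidsInc_map f r w).mp hv.2⟩, rfl⟩
    exact Multiset.map_injective f.injective (by simpa using hv.1)

theorem permAvoidCount_eq_card_arrangements (r n : ℕ) :
    permAvoidCount r n = #((arrangements (univ : Finset (Fin n))).filter (AvoidsInc r)) := by
  rw [permAvoidCount, Nat.card_eq_fintype_card, Fintype.card_subtype]
  refine card_bij (fun π _ => (List.finRange n).map π) (fun π hπ => ?_)
    (fun π _ σ _ h => ?_) (fun w hw => ?_)
  · rw [mem_filter] at hπ ⊢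
    refine ⟨mem_arrangements.mpr ?_, hπ.2⟩
    rw [← List.ofFn_eq_map, ← Fin.univ_val_map, Multiset.map_univ_val_equiv]
  · rw [← List.ofFn_eq_map, ← List.ofFn_eq_map] at h
    exact DFunLike.coe_injective (List.ofFn_injective h)
  · rw [mem_filter] at hw
    have hlen : w.length = n := by
      rw [length_of_mem_arrangements hw.1, card_univ, Fintype.card_fin]
    have hinj : Function.Injective (w.get ∘ Fin.cast hlen.symm) :=
      (List.nodup_iff_injective_get.mp (nodup_of_mem_arrangements hw.1)).comp
        (Fin.cast_injective _)
    set π := Equiv.ofBijective _ (Finite.injective_iff_bijective.mp hinj)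
    have hπ : (List.finRange n).map π = w := by
      apply List.ext_getElem (by simp [hlen])
      intro i _ _
      simp [π]
    exact ⟨π, by simpa [hπ] using hw.2, hπ⟩

variable {α : Type*} [LinearOrder α]

theorem card_filter_avoidsInc_arrangements (r : ℕ) (s : Finset α) :
    #((arrangements s).filter (AvoidsInc r)) = permAvoidCount r #s := by
  rw [permAvoidCount_eq_card_arrangements, ← card_filter_avoidsInc_arrangements_map
    (s.orderEmbOfFin rfl), map_orderEmbOfFin_univ]

theorem append_mem_arrangements {s T : Finset α} {l σ : List α} (hT : T ⊆ s)
    (hl : l ∈ arrangements T) (hσ : σ ∈ arrangements (s \ T)) : l ++ σ ∈ arrangements s := by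
  rw [mem_arrangements] at *
  rw [← Multiset.coe_add, hl, hσ, sdiff_val, add_tsub_cancel_of_le (val_le_iff.mpr hT)]

theorem toFinset_take_mem_powersetCard {s : Finset α} {w : List α} (hw : w ∈ arrangements s)
    {j : ℕ} (hj : j ≤ #s) : (w.take j).toFinset ∈ s.powersetCard j := by
  have hnodup := (nodup_of_mem_arrangements hw).sublist (w.take_sublist j)
  refine mem_powersetCard.mpr ⟨fun x hx => ?_, ?_⟩
  · rw [← mem_val, ← mem_arrangements.mp hw, Multiset.mem_coe]
    exact (w.take_sublist j).subset (List.mem_toFinset.mp hx)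
  · rw [List.toFinset_card_of_nodup hnodup, List.length_take, length_of_mem_arrangements hw]
    omega

theorem drop_mem_arrangements_sdiff {s : Finset α} {w : List α} (hw : w ∈ arrangements s)
    (j : ℕ) : w.drop j ∈ arrangements (s \ (w.take j).toFinset) := by
  have hnodup := (nodup_of_mem_arrangements hw).sublist (w.take_sublist j)
  have hsplit : s.val = ↑(w.take j) + ↑(w.drop j) := by
    rw [Multiset.coe_add, List.take_append_drop, mem_arrangements.mp hw]
  rw [mem_arrangements, sdiff_val, List.toFinset_val, hnodup.dedup, hsplit, add_tsub_cancel_left]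

theorem card_filter_isChain_take_avoidsInc_drop (r : ℕ) (s : Finset α) {j : ℕ} (hj : j ≤ #s) :
    #((arrangements s).filter
        (fun w => (w.take j).IsChain (· < ·) ∧ AvoidsInc r (w.drop j))) =
      (#s).choose j * permAvoidCount r (#s - j) := by
  have hsigma : #((arrangements s).filter
        (fun w => (w.take j).IsChain (· < ·) ∧ AvoidsInc r (w.drop j))) =
      #((s.powersetCard j).sigma fun T => (arrangements (s \ T)).filter (AvoidsInc r)) := by
    refine card_nbij' (fun w => ⟨(w.take j).toFinset, w.drop j⟩)
      (fun p => p.1.sort (· ≤ ·) ++ p.2) (fun w hw => ?_) (fun p hp => ?_)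
      (fun w hw => ?_) (fun p hp => ?_)
    · simp only [coe_filter, Set.mem_ofPred_eq, coe_sigma, Set.mem_sigma_iff, mem_coe] at hw ⊢
      exact ⟨toFinset_take_mem_powersetCard hw.1 hj, drop_mem_arrangements_sdiff hw.1 j, hw.2.2⟩
    · obtain ⟨T, σ⟩ := p
      simp only [coe_sigma, Set.mem_sigma_iff, mem_coe, mem_filter, mem_powersetCard] at hp
      obtain ⟨⟨hTs, hTj⟩, hσ, havoid⟩ := hp
      have hlen : (T.sort (· ≤ ·)).length = j := by rw [length_sort, hTj]
      simp only [coe_filter, Set.mem_ofPred_eq, List.take_left' hlen, List.drop_left' hlen]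
      exact ⟨append_mem_arrangements hTs (mem_arrangements.mpr (sort_eq _ _)) hσ,
        (sortedLT_sort T).isChain, havoid⟩
    · simp only [coe_filter, Set.mem_ofPred_eq] at hw
      have hnodup := (nodup_of_mem_arrangements hw.1).sublist (w.take_sublist j)
      dsimp only
      rw [(List.toFinset_sort _ hnodup).mpr (hw.2.1.pairwise.imp le_of_lt),
        List.take_append_drop]
    · obtain ⟨T, σ⟩ := p
      simp only [coe_sigma, Set.mem_sigma_iff, mem_coe, mem_powersetCard] at hp
      have hlen : (T.sort (· ≤ ·)).length = j := by rw [length_sort, hp.1.2]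
      simp only [List.take_left' hlen, List.drop_left' hlen, sort_toFinset]
  rw [hsigma, card_sigma, sum_congr rfl fun T hT => ?_, sum_const, card_powersetCard,
    smul_eq_mul]
  obtain ⟨hTs, hTj⟩ := mem_powersetCard.mp hT
  rw [card_filter_avoidsInc_arrangements, card_sdiff_of_subset hTs, hTj]

theorem sum_coeff_mul_choose_mul_permAvoidCount {r n : ℕ} (hr : 2 ≤ r) (hn : 1 ≤ n) :
    ∑ j ∈ range (n + 1), coeff r j * (n.choose j * permAvoidCount r (n - j) : ℕ) = 0 := by
  set s := (univ : Finset (Fin n))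
  have hs : #s = n := by rw [card_univ, Fintype.card_fin]
  have hcount : ∀ j ∈ range (n + 1), n.choose j * permAvoidCount r (n - j) =
      #((arrangements s).filter fun w =>
        (w.take j).IsChain (· < ·) ∧ AvoidsInc r (w.drop j)) := by
    intro j hj
    have hjs : j ≤ #s := by rw [hs]; exact Nat.lt_succ_iff.mp (mem_range.mp hj)
    rw [card_filter_isChain_take_avoidsInc_drop r s hjs, hs]
  calc ∑ j ∈ range (n + 1), coeff r j * (n.choose j * permAvoidCount r (n - j) : ℕ)
      = ∑ j ∈ range (n + 1), ∑ w ∈ arrangements s,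
          if (w.take j).IsChain (· < ·) ∧ AvoidsInc r (w.drop j) then coeff r j else 0 := by
        refine sum_congr rfl fun j hj => ?_
        rw [hcount j hj, card_filter, Nat.cast_sum, mul_sum]
        exact sum_congr rfl fun w _ => by split_ifs <;> simp
    _ = ∑ w ∈ arrangements s, ∑ j ∈ range (n + 1),
          if (w.take j).IsChain (· < ·) ∧ AvoidsInc r (w.drop j) then coeff r j else 0 := sum_comm
    _ = 0 := sum_eq_zero fun w hw => by
        have hlen : w.length = n := by rw [length_of_mem_arrangements hw, hs]
        simpa only [hlen] using
          sum_coeff_split_eq_zero hr (w := w) (List.ne_nil_of_length_pos (by omega))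

end Counting

theorem coeff_mul_add (r K i : ℕ) : coeff r (r * K + i) = coeff r i := by
  simp only [coeff, Nat.mul_add_mod]

theorem sum_range_mul_coeff {r : ℕ} (hr : 2 ≤ r) (X : ℕ → ℤ) (K : ℕ) :
    ∑ j ∈ range (r * K), coeff r j * X j = ∑ m ∈ range K, (X (r * m) - X (r * m + 1)) := by
  induction K with
  | zero => simp
  | succ K ih =>
    rw [Nat.mul_succ, sum_range_add, ih, sum_range_succ]
    congr 1
    obtain ⟨q, rfl⟩ : ∃ q, r = q + 2 := ⟨r - 2, by omega⟩
    rw [sum_range_succ', sum_range_succ', sum_eq_zero fun i hi => ?_, coeff_mul_add,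
      coeff_mul_add]
    · simp only [coeff, zero_add, Nat.one_mod, one_ne_zero, ↓reduceIte, Int.reduceNeg, neg_mul,
        one_mul, Nat.zero_mod, add_zero]
      ring
    · rw [coeff_mul_add, coeff, if_neg, if_neg, zero_mul]
      all_goals rw [Nat.mod_eq_of_lt (by have := mem_range.mp hi; omega)]; omega

theorem sum_range_choose_mul_permAvoidCount {r n : ℕ} (hr : 2 ≤ r) (hn : 1 ≤ n) :
    ∑ m ∈ range (n + 1), ((n.choose (r * m) * permAvoidCount r (n - r * m) : ℕ) -
      (n.choose (r * m + 1) * permAvoidCount r (n - (r * m + 1)) : ℕ) : ℤ) = 0 := by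
  set X : ℕ → ℤ := fun j => (n.choose j * permAvoidCount r (n - j) : ℕ)
  rw [← sum_range_mul_coeff hr X, ← sum_coeff_mul_choose_mul_permAvoidCount hr hn]
  refine (sum_subset (range_subset_range.mpr (by nlinarith)) fun j _ hj => ?_).symm
  simp [X, Nat.choose_eq_zero_of_lt (show n < j by simpa using hj)]

theorem permAvoidCount_zero {r : ℕ} (hr : 1 ≤ r) : permAvoidCount r 0 = 1 := by
  rw [permAvoidCount, Nat.card_eq_one_iff_unique]
  refine ⟨inferInstance, ⟨⟨1, (avoidsInc_iff r _).mpr fun a ha => absurd ha ?_⟩⟩⟩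
  simp only [List.finRange_zero, List.map_nil, List.length_nil]
  omega

end PermAvoid

theorem perm_avoid_123_recurrence :
    permAvoidCount 3 0 = 1 ∧
    ∀ n : ℕ, 1 ≤ n →
      (permAvoidCount 3 n : ℤ) =
        n * permAvoidCount 3 (n - 1) +
          ∑ m ∈ Finset.Icc 1 n,
            (-(n.choose (3 * m) : ℤ) * permAvoidCount 3 (n - 3 * m) +
              (n.choose (3 * m + 1) : ℤ) * permAvoidCount 3 (n - 3 * m - 1)) := by
  refine ⟨PermAvoid.permAvoidCount_zero (by norm_num), fun n hn => ?_⟩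
  have h := PermAvoid.sum_range_choose_mul_permAvoidCount (r := 3) (by norm_num) hn
  rw [Finset.sum_range_succ'] at h
  rw [← Finset.Ico_add_one_right_eq_Icc, Finset.sum_Ico_eq_sum_range]
  simp only [Nat.sub_sub, Nat.add_sub_cancel, add_comm 1, Nat.mul_zero, Nat.zero_add,
    Nat.choose_zero_right, Nat.choose_one_right, Nat.sub_zero, one_mul] at h ⊢
  push_cast at h
  have hflip : ∀ a b : ℤ, -a + b = -(a - b) := fun a b => by ring
  simp only [neg_mul, hflip, Finset.sum_neg_distrib]
  linarith
end

section
/- For r ≥ 2, the number a_r(n) of permutations of {1,...,n} avoiding the consecutive pattern 12...r (no r consecutive increasing entries) satisfies a_r(n) = n·a_r(n-1) + Σ_{m≥1} [ -C(n,mr)·a_r(n-mr) + C(n,mr+1)·a_r(n-mr-1) ], with a_r(0)=1 and a_r(k)=0 for k<0. -/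
open Finset

section Words

variable {α : Type*} [LinearOrder α] {r j : ℕ} {w : List α}

theorem avoidsInc_iff_forall_window :
    AvoidsInc r w ↔ ∀ i, i + r ≤ w.length → ¬ ((w.drop i).take r).IsChain (· < ·) := by
  refine ⟨fun h i hi hchain => h ⟨_, ?_, by simp; omega, hchain⟩, ?_⟩
  · exact ((w.drop i).take_prefix r).isInfix.trans (w.drop_suffix i).isInfix
  · rintro h ⟨l, ⟨s, t, rfl⟩, rfl, hchain⟩
    refine h s.length (by simp) ?_
    rwa [List.append_assoc, List.drop_left, List.take_left]

instance : DecidablePred (AvoidsInc (α := α) r) := fun w =>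
  decidable_of_iff (∀ i < w.length + 1 - r, ¬ ((w.drop i).take r).IsChain (· < ·)) <| by
    rw [avoidsInc_iff_forall_window]
    exact forall_congr' fun i => by constructor <;> intro h hi <;> exact h (by omega)

theorem AvoidsInc.of_length_lt (hw : w.length < r) : AvoidsInc r w :=
  fun ⟨_, hl, hlen, _⟩ => by have := hl.length_le; omega

theorem avoidsInc_map_iff {β : Type*} [LinearOrder β] {f : α → β} (hf : StrictMono f) :
    AvoidsInc r (w.map f) ↔ AvoidsInc r w := by
  simp only [avoidsInc_iff_forall_window, List.length_map, ← List.map_drop, ← List.map_take,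
    List.isChain_map, hf.lt_iff_lt]

theorem avoidsInc_drop_iff_forall_window (hj : j ≤ w.length) :
    AvoidsInc r (w.drop j) ↔
      ∀ p, j ≤ p → p + r ≤ w.length → ¬ ((w.drop p).take r).IsChain (· < ·) := by
  simp only [avoidsInc_iff_forall_window, List.drop_drop, List.length_drop]
  refine ⟨fun h p hjp hpw => ?_, fun h i hiw => h (j + i) (by omega) (by omega)⟩
  simpa [Nat.add_sub_cancel' hjp] using h (p - j) (by omega)

namespace List

theorem isChain_lt_take_drop_iff (w : List α) (i m : ℕ) :
    ((w.drop i).take m).IsChain (· < ·) ↔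
      ∀ t (_ : t + 1 < m) (h : i + t + 1 < w.length), w[i + t] < w[i + t + 1] := by
  simp only [List.isChain_iff_getElem, List.length_take, List.length_drop, List.getElem_take,
    List.getElem_drop]
  refine ⟨fun h t ht hi => ?_, fun h t ht => ?_⟩
  · simpa [Nat.add_assoc] using h t (by omega)
  · simpa [Nat.add_assoc] using h t (by omega) (by omega)

theorem isChain_lt_take_iff (w : List α) (m : ℕ) :
    (w.take m).IsChain (· < ·) ↔
      ∀ t (_ : t + 1 < m) (h : t + 1 < w.length), w[t] < w[t + 1] := by
  simpa using w.isChain_lt_take_drop_iff 0 m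

def incPrefixLength (w : List α) : ℕ :=
  Nat.findGreatest (fun k => (w.take k).IsChain (· < ·)) w.length

theorem incPrefixLength_le_length : w.incPrefixLength ≤ w.length :=
  Nat.findGreatest_le _

theorem isChain_take_incPrefixLength : (w.take w.incPrefixLength).IsChain (· < ·) :=
  Nat.findGreatest_spec (P := fun k => (w.take k).IsChain (· < ·)) (Nat.zero_le _) (by simp)

theorem isChain_lt_take_iff_le_incPrefixLength (hj : j ≤ w.length) :
    (w.take j).IsChain (· < ·) ↔ j ≤ w.incPrefixLength := by
  refine ⟨Nat.le_findGreatest (P := fun k => (w.take k).IsChain (· < ·)) hj, fun h => ?_⟩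
  simpa [List.take_take, Nat.min_eq_left h] using (isChain_take_incPrefixLength (w := w)).take j

theorem one_le_incPrefixLength (hw : w ≠ []) : 1 ≤ w.incPrefixLength := by
  have : 1 ≤ w.length := List.length_pos_iff.2 hw
  exact (isChain_lt_take_iff_le_incPrefixLength this).1
    ((isChain_lt_take_iff w 1).2 fun t ht => by omega)

theorem not_lt_getElem_incPrefixLength (h : w.incPrefixLength < w.length) :
    ¬ w[w.incPrefixLength - 1] < w[w.incPrefixLength] := by
  set d := w.incPrefixLength
  have hd : 1 ≤ d := one_le_incPrefixLength (List.ne_nil_of_length_pos (by omega))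
  intro hlt
  refine Nat.findGreatest_is_greatest (Nat.lt_succ_self d) h ?_
  rw [isChain_lt_take_iff]
  intro t ht htw
  rcases Nat.lt_or_ge (t + 1) d with htd | htd
  · exact (isChain_lt_take_iff w d).1 isChain_take_incPrefixLength t htd htw
  · obtain rfl : t = d - 1 := by omega
    simpa [Nat.sub_add_cancel hd] using hlt

end List

/-- An increasing window of length `r` starting before `w.incPrefixLength` either lies inside
the increasing prefix or straddles its first descent. -/
theorem avoidsInc_drop_iff_of_le_incPrefixLength (hj : j ≤ w.incPrefixLength) :
    AvoidsInc r (w.drop j) ↔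
      w.incPrefixLength < j + r ∧ AvoidsInc r (w.drop w.incPrefixLength) := by
  set d := w.incPrefixLength
  have hdw : d ≤ w.length := List.incPrefixLength_le_length
  rw [avoidsInc_drop_iff_forall_window (hj.trans hdw), avoidsInc_drop_iff_forall_window hdw]
  constructor
  · intro h
    refine ⟨Nat.lt_of_not_le fun hjr => h j le_rfl (by omega) ?_, fun p hp => h p (by omega)⟩
    rw [List.isChain_lt_take_drop_iff]
    intro t ht htw
    exact (List.isChain_lt_take_iff w d).1 List.isChain_take_incPrefixLength (j + t)
      (by omega) htw
  · rintro ⟨hdr, h⟩ p hjp hpw hchain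
    rcases le_or_gt d p with hdp | hpd
    · exact h p hdp hpw hchain
    · apply List.not_lt_getElem_incPrefixLength (w := w) (by omega)
      have := (List.isChain_lt_take_drop_iff w p r).1 hchain (d - 1 - p) (by omega) (by omega)
      simpa only [show p + (d - 1 - p) = d - 1 by omega, show d - 1 + 1 = d by omega] using this

def IsCut (r : ℕ) (w : List α) (j : ℕ) : Prop :=
  j ≤ w.length ∧ (w.take j).IsChain (· < ·) ∧ AvoidsInc r (w.drop j)

instance : Decidable (IsCut r w j) := inferInstanceAs (Decidable (_ ∧ _ ∧ _))

theorem isCut_iff :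
    IsCut r w j ↔ j ≤ w.incPrefixLength ∧ w.incPrefixLength < j + r ∧
      AvoidsInc r (w.drop w.incPrefixLength) := by
  constructor
  · rintro ⟨hjw, hchain, havoid⟩
    have hjd := (List.isChain_lt_take_iff_le_incPrefixLength hjw).1 hchain
    exact ⟨hjd, (avoidsInc_drop_iff_of_le_incPrefixLength hjd).1 havoid⟩
  · rintro ⟨hjd, h⟩
    have hjw := hjd.trans List.incPrefixLength_le_length
    exact ⟨hjw, (List.isChain_lt_take_iff_le_incPrefixLength hjw).2 hjd,
      (avoidsInc_drop_iff_of_le_incPrefixLength hjd).2 h⟩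

theorem card_filter_isCut_mul_add (hr : 0 < r) {c : ℕ} (hc : c ≤ w.incPrefixLength) :
    #{m ∈ range (w.length + 1) | IsCut r w (m * r + c)} =
      if AvoidsInc r (w.drop w.incPrefixLength) then 1 else 0 := by
  have hdw := List.incPrefixLength_le_length (w := w)
  split_ifs with h
  · rw [card_eq_one]
    refine ⟨(w.incPrefixLength - c) / r, ?_⟩
    ext m
    have := Nat.le_mul_of_pos_right m hr
    simp only [mem_filter, mem_range, isCut_iff, h, and_true, mem_singleton, eq_comm (a := m),
      Nat.div_eq_iff hr]
    omega
  · rw [card_eq_zero, filter_eq_empty_iff]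
    exact fun m _ hm => h (isCut_iff.1 hm).2.2

end Words

section Arrangements

variable {α : Type*} [LinearOrder α] {r : ℕ} {s S : Finset α} {l : List α}

def arrangements (s : Finset α) : Finset (List α) := s.val.lists.toFinset

theorem mem_arrangements : l ∈ arrangements s ↔ l.Nodup ∧ l.toFinset = s := by
  rw [arrangements, Multiset.mem_toFinset, Multiset.mem_lists_iff, Multiset.quot_mk_to_coe]
  constructor
  · intro h
    refine ⟨Multiset.coe_nodup.1 (h ▸ s.nodup), ?_⟩
    ext x
    simp [← Multiset.mem_coe, ← h]
  · rintro ⟨hl, rfl⟩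
    simp [List.toFinset_val, hl.dedup]

theorem length_of_mem_arrangements (hl : l ∈ arrangements s) : l.length = #s := by
  obtain ⟨hnodup, rfl⟩ := mem_arrangements.1 hl
  exact (List.toFinset_card_of_nodup hnodup).symm

theorem card_arrangements_avoidsInc (r : ℕ) (s : Finset α) :
    #{l ∈ arrangements s | AvoidsInc r l} = permAvoidCount r #s := by
  rw [permAvoidCount, Nat.card_eq_fintype_card, Fintype.card_subtype]
  set e := s.orderIsoOfFin rfl
  have hmono : StrictMono fun i => (e i : α) := fun _ _ h => e.strictMono h
  symm
  refine card_bij (fun π _ => (List.finRange #s).map fun i => (e (π i) : α)) ?_ ?_ ?_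
  · intro π hπ
    rw [mem_filter] at hπ ⊢
    refine ⟨mem_arrangements.2 ⟨?_, ?_⟩, ?_⟩
    · exact (List.nodup_finRange _).map fun i j h => π.injective (e.injective (Subtype.ext h))
    · ext x
      simp only [List.mem_toFinset, List.mem_map, List.mem_finRange, true_and]
      exact ⟨fun ⟨i, hi⟩ => hi ▸ (e (π i)).2, fun hx => ⟨π.symm (e.symm ⟨x, hx⟩), by simp⟩⟩
    · simpa only [List.map_map, Function.comp_def] using (avoidsInc_map_iff hmono).2 hπ.2
  · intro π _ σ _ h
    refine Equiv.ext fun i => ?_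
    simpa using List.map_inj_left.1 h i (List.mem_finRange i)
  · intro l hl
    rw [mem_filter] at hl
    obtain ⟨hnodup, hs⟩ := mem_arrangements.1 hl.1
    have hlen := length_of_mem_arrangements hl.1
    let f : Fin #s → Fin #s := fun i =>
      e.symm ⟨l[i], hs ▸ List.mem_toFinset.2 (List.getElem_mem _)⟩
    have hf : Function.Injective f := fun i j h => by
      simpa [f, Fin.ext_iff, hnodup.getElem_inj_iff] using h
    have hmap : (List.finRange #s).map
        (fun i => (e (Equiv.ofBijective f hf.bijective_of_finite i) : α)) = l := by
      apply List.ext_getElem (by simp [hlen])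
      intro i _ _
      simp [f]
    refine ⟨Equiv.ofBijective f hf.bijective_of_finite, ?_, hmap⟩
    refine mem_filter.2 ⟨mem_univ _, (avoidsInc_map_iff hmono).1 ?_⟩
    simpa only [List.map_map, Function.comp_def, hmap] using hl.2

theorem sort_append_mem_arrangements (hS : S ⊆ s) {u : List α}
    (hu : u ∈ arrangements (s \ S)) : S.sort (· ≤ ·) ++ u ∈ arrangements s := by
  obtain ⟨hnodup, hu⟩ := mem_arrangements.1 hu
  refine mem_arrangements.2 ⟨List.nodup_append.2 ⟨S.sort_nodup _, hnodup, ?_⟩, ?_⟩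
  · rintro a ha _ hb rfl
    have hb : a ∈ s \ S := hu ▸ List.mem_toFinset.2 hb
    exact (mem_sdiff.1 hb).2 ((S.mem_sort _).1 ha)
  · rw [List.toFinset_append, S.sort_toFinset, hu, union_sdiff_of_subset hS]

theorem drop_mem_arrangements (hl : l ∈ arrangements s) (j : ℕ) :
    l.drop j ∈ arrangements (s \ (l.take j).toFinset) := by
  obtain ⟨hnodup, rfl⟩ := mem_arrangements.1 hl
  refine mem_arrangements.2 ⟨hnodup.sublist (l.drop_sublist j), ?_⟩
  ext x
  simp only [List.mem_toFinset, mem_sdiff]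
  refine ⟨fun hx => ⟨List.mem_of_mem_drop hx,
    fun hx' => List.disjoint_take_drop hnodup le_rfl hx' hx⟩, fun ⟨hx, hx'⟩ => ?_⟩
  rw [← List.take_append_drop j l, List.mem_append] at hx
  exact hx.resolve_left hx'

theorem card_filter_isCut_toFinset_take {j : ℕ} (hS : S ∈ s.powersetCard j) :
    #{l ∈ arrangements s | IsCut r l j ∧ (l.take j).toFinset = S} =
      permAvoidCount r (#s - j) := by
  obtain ⟨hSs, hSj⟩ := mem_powersetCard.1 hS
  have hsort : (S.sort (· ≤ ·)).length = j := by rw [length_sort, hSj]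
  rw [show #s - j = #(s \ S) by rw [card_sdiff_of_subset hSs, hSj],
    ← card_arrangements_avoidsInc]
  symm
  refine card_nbij' (S.sort (· ≤ ·) ++ ·) (List.drop j) ?_ ?_ ?_ ?_
  · intro u hu
    simp only [mem_coe, mem_filter] at hu ⊢
    refine ⟨sort_append_mem_arrangements hSs hu.1, ⟨by simp [hsort], ?_, ?_⟩, ?_⟩
    · rw [List.take_left' hsort, ← List.sortedLT_iff_isChain]
      exact S.sortedLT_sort
    · rw [List.drop_left' hsort]
      exact hu.2
    · rw [List.take_left' hsort, S.sort_toFinset]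
  · intro l hl
    simp only [mem_coe, mem_filter] at hl ⊢
    obtain ⟨hl, hcut, hS⟩ := hl
    exact ⟨hS ▸ drop_mem_arrangements hl j, hcut.2.2⟩
  · intro u _
    exact List.drop_left' hsort
  · intro l hl
    simp only [mem_coe, mem_filter] at hl
    obtain ⟨hl, hcut, rfl⟩ := hl
    have : (l.take j).toFinset.sort (· ≤ ·) = l.take j :=
      (Finset.sortedLT_sort _).eq_of_mem_iff (List.sortedLT_iff_isChain.2 hcut.2.1) (by simp)
    simp only [this, List.take_append_drop]

theorem card_arrangements_isCut (r j : ℕ) (s : Finset α) :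
    #{l ∈ arrangements s | IsCut r l j} = (#s).choose j * permAvoidCount r (#s - j) := by
  have hmaps : Set.MapsTo (fun l : List α => (l.take j).toFinset)
      ({l ∈ arrangements s | IsCut r l j} : Finset (List α))
      (s.powersetCard j : Set (Finset α)) := by
    intro l hl
    simp only [mem_coe, mem_filter] at hl
    obtain ⟨hnodup, rfl⟩ := mem_arrangements.1 hl.1
    refine mem_powersetCard.2 ⟨fun x hx => ?_, ?_⟩
    · simpa using List.mem_of_mem_take (List.mem_toFinset.1 hx)
    · rw [List.toFinset_card_of_nodup (hnodup.sublist (l.take_sublist j)), List.length_take]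
      exact min_eq_left hl.2.1
  rw [card_eq_sum_card_fiberwise hmaps, sum_congr rfl fun S hS => ?_, sum_const,
    card_powersetCard, smul_eq_mul]
  rw [filter_filter]
  exact card_filter_isCut_toFinset_take hS

end Arrangements

theorem sum_choose_mul_permAvoidCount_eq {r : ℕ} (hr : 0 < r) {n : ℕ} (hn : 1 ≤ n) :
    ∑ m ∈ range (n + 1), n.choose (m * r) * permAvoidCount r (n - m * r) =
      ∑ m ∈ range (n + 1), n.choose (m * r + 1) * permAvoidCount r (n - (m * r + 1)) := by
  have hcount (c : ℕ) :
      ∑ m ∈ range (n + 1), n.choose (m * r + c) * permAvoidCount r (n - (m * r + c)) =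
        ∑ l ∈ arrangements (range n), #{m ∈ range (n + 1) | IsCut r l (m * r + c)} := by
    calc _ = ∑ m ∈ range (n + 1), #{l ∈ arrangements (range n) | IsCut r l (m * r + c)} :=
          sum_congr rfl fun m _ => by rw [card_arrangements_isCut, card_range]
      _ = _ :=
          sum_card_bipartiteAbove_eq_sum_card_bipartiteBelow fun m l => IsCut r l (m * r + c)
  have hcut (l) (hl : l ∈ arrangements (range n)) :
      #{m ∈ range (n + 1) | IsCut r l (m * r + 0)} =
        #{m ∈ range (n + 1) | IsCut r l (m * r + 1)} := by
    have hlen : l.length = n := by rw [length_of_mem_arrangements hl, card_range]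
    have hd := List.one_le_incPrefixLength (w := l) (List.ne_nil_of_length_pos (by omega))
    rw [← hlen, card_filter_isCut_mul_add hr (Nat.zero_le _), card_filter_isCut_mul_add hr hd]
  calc _ = ∑ m ∈ range (n + 1), n.choose (m * r + 0) * permAvoidCount r (n - (m * r + 0)) := rfl
    _ = _ := hcount 0
    _ = _ := sum_congr rfl hcut
    _ = _ := (hcount 1).symm

theorem permAvoidCount_zero {r : ℕ} (hr : 0 < r) : permAvoidCount r 0 = 1 := by
  simp [permAvoidCount, AvoidsInc.of_length_lt (w := ([] : List (Fin 0))) hr]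

theorem perm_avoid_fast_recurrence (r : ℕ) (hr : 2 ≤ r) :
    permAvoidCount r 0 = 1 ∧
    ∀ n : ℕ, 1 ≤ n →
      (permAvoidCount r n : ℤ) =
        n * permAvoidCount r (n - 1) +
          ∑ m ∈ Finset.Icc 1 n,
            (-(n.choose (m * r) : ℤ) * permAvoidCount r (n - m * r) +
              (n.choose (m * r + 1) : ℤ) * permAvoidCount r (n - m * r - 1)) := by
  refine ⟨permAvoidCount_zero (by omega), fun n hn => ?_⟩
  have key := sum_choose_mul_permAvoidCount_eq (r := r) (by omega) hn
  rw [range_eq_Ico, sum_eq_sum_Ico_succ_bot n.succ_pos, sum_eq_sum_Ico_succ_bot n.succ_pos] at key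
  simp only [Nat.succ_eq_add_one, Ico_add_one_right_eq_Icc, zero_mul, Nat.choose_zero_right,
    Nat.sub_zero, one_mul, zero_add, Nat.choose_one_right, ← Nat.sub_sub] at key
  zify at key
  simp only [neg_mul, sum_add_distrib, sum_neg_distrib]
  linarith
end

section
/- (Gessel) For n ≥ 1 and r ≥ 2, the generating function F_r(x_1,...,x_n) = Σ_{m ∈ ℕ^n} f_r(m) x_1^{m_1}···x_n^{m_n}, where f_r(m) is the number of words with m_j copies of each letter j that avoid the consecutive pattern 12...r, equals 1/(1 - e_1 + Σ_{m≥1} (e_{mr} - e_{mr+1})), where e_k is the elementary symmetric polynomial of degree k in x_1,...,x_n (with e_k = 0 for k > n). -/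
/-- `wordAvoidCount r n m` is the number of words over the alphabet `Fin n`
with exactly `m j` occurrences of each letter `j`, avoiding the consecutive
pattern `1 2 ... r`. -/
noncomputable def wordAvoidCount (r n : ℕ) (m : Fin n → ℕ) : ℕ :=
  Nat.card {w : List (Fin n) // (∀ j, w.count j = m j) ∧ AvoidsInc r w}

/-- The generating function `∑_m f_r(m) x^m`. -/
noncomputable def wordAvoidGF (r n : ℕ) : MvPowerSeries (Fin n) ℤ :=
  fun d => (wordAvoidCount r n ⇑d : ℤ)

/-!
The denominator expands as `1 - e₁ + ∑ₘ (e_{mr} - e_{mr+1}) = ∑_{S ⊆ [n]} w(|S|) x^S`, where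
the weight `w` is `r`-periodic with `w 0 = 1`, `w 1 = -1` and `w k = 0` for `2 ≤ k < r`. So the
coefficient of `x^d` in `F_r` times the denominator counts pairs `(S, v)`, with `v` an avoiding
word and `S + content v = d`, weighted by `w(|S|)`. Writing `S` as an increasing word and
concatenating, such pairs become the words `u` of content `d` together with a cut point `p`
splitting `u` into an increasing prefix of length `p` and an avoiding suffix. For nonempty `u`
the admissible `p` form an interval `[p₀, a]`, where `a` is the length of the longest increasing
prefix of `u`: either `p₀ = 0` and `1 ≤ a < r`, or `a = p₀ + r - 1`. In both cases the weights
`w p` over the interval cancel, so only the empty word contributes.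
-/

namespace Finsupp

variable {σ : Type*}

theorem toMultiset_sum_single_one (S : Finset σ) :
    toMultiset (∑ i ∈ S, single i 1) = S.val := by
  simp

variable [DecidableEq σ]

theorem toMultiset_tsub (d e : σ →₀ ℕ) : toMultiset (d - e) = toMultiset d - toMultiset e :=
  Multiset.ext.mpr fun a => by simp [Multiset.count_sub]

theorem toMultiset_le_toMultiset {d e : σ →₀ ℕ} :
    toMultiset d ≤ toMultiset e ↔ d ≤ e :=
  orderIsoMultiset.le_iff_le

theorem toMultiset_eq_zero {d : σ →₀ ℕ} : toMultiset d = 0 ↔ d = 0 := by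
  simpa using orderIsoMultiset.injective.eq_iff (b := 0)

end Finsupp

namespace List

variable {α : Type*}

theorem IsChain.take_of_le {R : α → α → Prop} {l : List α} {p a : ℕ}
    (h : (l.take a).IsChain R) (hpa : p ≤ a) : (l.take p).IsChain R := by
  simpa [List.take_take, min_eq_left hpa] using h.take p

theorem sort_toFinset_of_isChain [LinearOrder α] {l : List α} (hl : l.IsChain (· < ·)) :
    l.toFinset.sort = l :=
  (Finset.sortedLT_sort _).eq_of_mem_iff (sortedLT_iff_isChain.mpr hl) (by simp)

end List

namespace MvPolynomial

variable {σ R : Type*} [Fintype σ] [CommRing R]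

open Finset

theorem esymm_eq_zero_of_card_lt {k : ℕ} (hk : Fintype.card σ < k) : esymm σ R k = 0 := by
  rw [esymm, powersetCard_eq_empty.mpr (by simpa using hk), sum_empty]

theorem sum_monomial_card_eq_sum_smul_esymm (c : ℕ → R) :
    ∑ S : Finset σ, monomial (∑ i ∈ S, Finsupp.single i 1) (c #S)
      = ∑ k ∈ range (Fintype.card σ + 1), c k • esymm σ R k := by
  rw [← powerset_univ, sum_powerset, card_univ]
  refine sum_congr rfl fun k _ => ?_
  rw [esymm_eq_sum_monomial, smul_sum]
  refine sum_congr rfl fun S hS => ?_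
  rw [(mem_powersetCard.mp hS).2, smul_monomial, smul_eq_mul, mul_one]

end MvPolynomial

namespace MvPowerSeries

theorem coeff_mul_coe_sum_monomial {σ ι R : Type*} [CommSemiring R] (F : MvPowerSeries σ R)
    (s : Finset ι) (e : ι → σ →₀ ℕ) (c : ι → R) (d : σ →₀ ℕ) :
    coeff d (F * ((∑ i ∈ s, MvPolynomial.monomial (e i) (c i) : MvPolynomial σ R) :
      MvPowerSeries σ R))
      = ∑ i ∈ s, if e i ≤ d then coeff (d - e i) F * c i else 0 := by
  rw [← MvPolynomial.coeToMvPowerSeries.ringHom_apply, map_sum]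
  simp only [MvPolynomial.coeToMvPowerSeries.ringHom_apply, MvPolynomial.coe_monomial,
    Finset.mul_sum, map_sum, coeff_mul_monomial]

end MvPowerSeries

namespace Gessel

open Finset MvPolynomial

def runWeight (r k : ℕ) : ℤ := if k % r = 0 then 1 else if k % r = 1 then -1 else 0

section RunWeight

variable {r : ℕ}

theorem runWeight_mul_add (m i : ℕ) : runWeight r (m * r + i) = runWeight r i := by
  simp only [runWeight, Nat.mul_add_mod']

theorem runWeight_add_self (k : ℕ) : runWeight r (k + r) = runWeight r k := by
  simpa [add_comm k] using runWeight_mul_add (r := r) 1 k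

theorem runWeight_mul_self (m : ℕ) : runWeight r (m * r) = 1 := by simp [runWeight]

theorem runWeight_zero : runWeight r 0 = 1 := by simp [runWeight]

theorem runWeight_one (hr : 2 ≤ r) : runWeight r 1 = -1 := by
  simp [runWeight, Nat.mod_eq_of_lt (show 1 < r by omega)]

theorem runWeight_eq_zero_of_two_le_of_lt {k : ℕ} (h2 : 2 ≤ k) (hk : k < r) :
    runWeight r k = 0 := by
  simp only [runWeight, Nat.mod_eq_of_lt hk]
  omega

theorem sum_range_runWeight_smul {M : Type*} [AddCommGroup M] (hr : 2 ≤ r) (h : ℕ → M)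
    (m : ℕ) :
    ∑ i ∈ range r, runWeight r (m * r + i) • h (m * r + i) = h (m * r) - h (m * r + 1) := by
  rw [sum_eq_add_of_mem 0 1 (mem_range.mpr (by omega)) (mem_range.mpr (by omega)) (by simp)]
  · simp [runWeight_mul_self, runWeight_mul_add, runWeight_one hr, sub_eq_add_neg]
  · intro i hi hi01
    rw [mem_range] at hi
    rw [runWeight_mul_add, runWeight_eq_zero_of_two_le_of_lt (by omega) hi, zero_smul]

theorem sum_range_mul_runWeight_smul {M : Type*} [AddCommGroup M] (hr : 2 ≤ r) (h : ℕ → M)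
    (N : ℕ) :
    ∑ k ∈ range (N * r), runWeight r k • h k
      = ∑ m ∈ range N, (h (m * r) - h (m * r + 1)) := by
  induction N with
  | zero => simp
  | succ N ih => rw [Nat.succ_mul, sum_range_add, ih, sum_range_runWeight_smul hr, sum_range_succ]

theorem sum_range_runWeight_eq_zero (hr : 2 ≤ r) {k : ℕ} (h2 : 2 ≤ k) (hk : k ≤ r) :
    ∑ p ∈ range k, runWeight r p = 0 := by
  rw [sum_eq_add_of_mem 0 1 (mem_range.mpr (by omega)) (mem_range.mpr (by omega)) (by simp),
    runWeight_zero, runWeight_one hr, add_neg_cancel]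
  intro p hp hp01
  rw [mem_range] at hp
  exact runWeight_eq_zero_of_two_le_of_lt (by omega) (by omega)

theorem sum_Ico_runWeight_eq_zero (hr : 2 ≤ r) (s : ℕ) :
    ∑ p ∈ Ico s (s + r), runWeight r p = 0 := by
  induction s with
  | zero => simpa using sum_range_runWeight_eq_zero hr hr le_rfl
  | succ s ih =>
    rw [sum_eq_sum_Ico_succ_bot (by omega)] at ih
    rw [show s + 1 + r = s + r + 1 by omega, sum_Ico_succ_top (by omega), runWeight_add_self]
    linarith

end RunWeight

section Words

variable {α : Type*} [LT α] {r : ℕ}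

theorem avoidsInc_nil (hr : 0 < r) : AvoidsInc r ([] : List α) := by
  rintro ⟨l, hl, hlen, -⟩
  have := hl.length_le
  simp_all only [List.length_nil, nonpos_iff_eq_zero]
  omega

theorem AvoidsInc.pos {u : List α} (h : AvoidsInc r u) : 0 < r :=
  Nat.pos_of_ne_zero fun hr => h ⟨[], List.nil_infix, hr.symm, List.isChain_nil⟩

theorem AvoidsInc.of_isInfix {u v : List α} (h : AvoidsInc r u) (hvu : v <:+: u) :
    AvoidsInc r v := fun ⟨l, hlv, hlen, hl⟩ => h ⟨l, hlv.trans hvu, hlen, hl⟩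

theorem AvoidsInc.drop {u : List α} (h : AvoidsInc r u) (p : ℕ) : AvoidsInc r (u.drop p) :=
  AvoidsInc.of_isInfix h (List.drop_suffix p u).isInfix

theorem isChain_take_of_not_avoidsInc_cons {x : α} {t : List α} (h : ¬ AvoidsInc r (x :: t))
    (ht : AvoidsInc r t) : ((x :: t).take r).IsChain (· < ·) ∧ r ≤ (x :: t).length := by
  obtain ⟨l, hl, hlen, hchain⟩ := not_not.mp h
  rcases List.infix_cons_iff.mp hl with hpre | hinf
  · rw [List.prefix_iff_eq_take.mp hpre, hlen] at hchain
    exact ⟨hchain, hlen ▸ hpre.length_le⟩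
  · exact absurd ⟨l, hinf, hlen, hchain⟩ ht

theorem lt_add_of_isChain_take {u : List α} {a p : ℕ} (ha : (u.take a).IsChain (· < ·))
    (hp : AvoidsInc r (u.drop p)) (hau : a ≤ u.length) : a < p + r := by
  by_contra! hpa
  refine hp ⟨(u.drop p).take r, (List.take_prefix _ _).isInfix,
    by simp only [List.length_take, List.length_drop]; omega, ?_⟩
  have : (u.drop p).take r = ((u.take a).drop p).take r := by
    rw [List.drop_take, List.take_take, min_eq_left (by omega)]
  rw [this]
  exact (ha.drop p).take r

theorem isChain_take_add_of_not_avoidsInc_drop {u : List α} {q : ℕ}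
    (hq : (u.take (q + 1)).IsChain (· < ·)) (hnot : ¬ AvoidsInc r (u.drop q))
    (havoid : AvoidsInc r (u.drop (q + 1))) :
    (u.take (q + r)).IsChain (· < ·) ∧ q + r ≤ u.length := by
  obtain ⟨x, t, hxt⟩ : ∃ x t, u.drop q = x :: t := by
    refine List.ne_nil_iff_exists_cons.mp fun h => hnot ?_
    have hle : u.length ≤ q + 1 := by have := List.drop_eq_nil_iff.mp h; omega
    rwa [h, ← List.drop_eq_nil_of_le hle]
  have ht : u.drop (q + 1) = t := by rw [← List.drop_drop, hxt, List.drop_one, List.tail_cons]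
  rw [hxt] at hnot
  rw [ht] at havoid
  obtain ⟨hrun, hlen⟩ := isChain_take_of_not_avoidsInc_cons hnot havoid
  obtain ⟨s, rfl⟩ := Nat.exists_eq_succ_of_ne_zero (AvoidsInc.pos havoid).ne'
  refine ⟨?_, ?_⟩
  · rw [List.take_add, hxt, List.take_succ_cons]
    rw [List.take_add, hxt, List.take_succ_cons, List.take_zero] at hq
    rw [List.take_succ_cons] at hrun
    simpa using hq.append_overlap (l₃ := t.take s) hrun (List.cons_ne_nil x [])
  · have := congrArg List.length hxt
    simp only [List.length_drop, List.length_cons] at this hlen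
    omega

open scoped Classical in
noncomputable def cuts (r : ℕ) (u : List α) : Finset ℕ :=
  {p ∈ range (u.length + 1) | (u.take p).IsChain (· < ·) ∧ AvoidsInc r (u.drop p)}

theorem mem_cuts {u : List α} {p : ℕ} :
    p ∈ cuts r u ↔
      p ≤ u.length ∧ (u.take p).IsChain (· < ·) ∧ AvoidsInc r (u.drop p) := by
  simp [cuts]

theorem cuts_nil (hr : 0 < r) : cuts r ([] : List α) = {0} := by
  ext p
  simp [cuts, avoidsInc_nil hr]

open scoped Classical in
theorem cuts_eq_Icc (u : List α) (hex : ∃ p, AvoidsInc r (u.drop p)) :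
    cuts r u = Icc (Nat.find hex)
      (Nat.findGreatest (fun p => (u.take p).IsChain (· < ·)) u.length) := by
  ext p
  simp only [mem_cuts, mem_Icc]
  constructor
  · rintro ⟨hpu, hp, hpr⟩
    exact ⟨Nat.find_min' hex hpr, Nat.le_findGreatest hpu hp⟩
  · rintro ⟨hp₀p, hpa⟩
    have ha := Nat.findGreatest_spec (P := fun p => (u.take p).IsChain (· < ·))
      (Nat.zero_le u.length) List.isChain_nil
    refine ⟨hpa.trans (Nat.findGreatest_le _), ha.take_of_le hpa, ?_⟩
    simpa [List.drop_drop, Nat.add_sub_cancel' hp₀p] using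
      AvoidsInc.drop (Nat.find_spec hex) (p - Nat.find hex)

theorem sum_cuts_runWeight (hr : 2 ≤ r) (u : List α) :
    ∑ p ∈ cuts r u, runWeight r p = if u = [] then 1 else 0 := by
  classical
  rcases eq_or_ne u [] with rfl | hu
  · simp [cuts_nil (show 0 < r by omega), runWeight_zero]
  have hex : ∃ p, AvoidsInc r (u.drop p) :=
    ⟨u.length, by simpa using avoidsInc_nil (α := α) (show 0 < r by omega)⟩
  rw [if_neg hu, cuts_eq_Icc u hex]
  set a := Nat.findGreatest (fun p => (u.take p).IsChain (· < ·)) u.length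
  set p₀ := Nat.find hex
  have haL : a ≤ u.length := Nat.findGreatest_le _
  have ha : (u.take a).IsChain (· < ·) :=
    Nat.findGreatest_spec (P := fun p => (u.take p).IsChain (· < ·)) (Nat.zero_le _)
      List.isChain_nil
  have hp₀ : AvoidsInc r (u.drop p₀) := Nat.find_spec hex
  rcases lt_or_ge a p₀ with hap | hpa
  · simp [Icc_eq_empty_of_lt hap]
  have hlt : a < p₀ + r := lt_add_of_isChain_take ha hp₀ haL
  rcases Nat.eq_zero_or_pos p₀ with h0 | h0
  · -- `u` avoids the pattern, so its longest increasing prefix has length in `[1, r)`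
    have ha1 : 1 ≤ a :=
      Nat.le_findGreatest (List.length_pos_iff.mpr hu) (by cases u <;> simp_all)
    rw [h0, ← Nat.range_succ_eq_Icc_zero]
    exact sum_range_runWeight_eq_zero hr (by omega) (by omega)
  · -- the increasing run with which `u.drop (p₀ - 1)` starts ends exactly at `a`
    have hrun := isChain_take_add_of_not_avoidsInc_drop (q := p₀ - 1)
      (ha.take_of_le (by omega)) (Nat.find_min hex (by omega))
      (by rwa [Nat.sub_add_cancel h0])
    have har : p₀ - 1 + r ≤ a := Nat.le_findGreatest hrun.2 hrun.1
    rw [show Icc p₀ a = Ico p₀ (p₀ + r) by ext; simp only [mem_Icc, mem_Ico]; omega]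
    exact sum_Ico_runWeight_eq_zero hr p₀

open scoped Classical in
noncomputable def avoiders (r : ℕ) (M : Multiset α) : Finset (List α) :=
  {w ∈ M.lists.toFinset | AvoidsInc r w}

theorem mem_avoiders {M : Multiset α} {w : List α} :
    w ∈ avoiders r M ↔ (w : Multiset α) = M ∧ AvoidsInc r w := by
  classical
  simp [avoiders, Multiset.mem_lists_iff, eq_comm]

end Words

section Arrangements

variable {α : Type*} [LinearOrder α] [Fintype α] {r : ℕ}

theorem sum_avoiders_sigma_eq_sum_cuts_sigma {β : Type*} [AddCommMonoid β] (M : Multiset α)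
    (f : ℕ → β) :
    ∑ x ∈ (univ : Finset (Finset α)).sigma
        (fun S => if S.val ≤ M then avoiders r (M - S.val) else ∅), f #x.1
      = ∑ y ∈ M.lists.toFinset.sigma (cuts r), f y.2 := by
  classical
  refine sum_bij' (fun x _ => ⟨x.1.sort ++ x.2, #x.1⟩)
    (fun y _ => ⟨(y.1.take y.2).toFinset, y.1.drop y.2⟩) ?_ ?_ ?_ ?_ (fun _ _ => rfl)
  · rintro ⟨S, w⟩ hx
    simp only [mem_sigma, mem_univ, true_and, mem_ite, notMem_empty, imp_false, not_not,
      mem_avoiders] at hx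
    obtain ⟨hw, hSM⟩ := hx
    obtain ⟨hwM, hw⟩ := hw hSM
    have hlen : S.sort.length = #S := length_sort _
    simp only [mem_sigma, Multiset.mem_toFinset, Multiset.mem_lists_iff, mem_cuts]
    refine ⟨?_, by simp [hlen], ?_, ?_⟩
    · rw [Multiset.quot_mk_to_coe, ← Multiset.coe_add, sort_eq, hwM, add_tsub_cancel_of_le hSM]
    · rw [List.take_left' hlen]; exact List.sortedLT_iff_isChain.mp (sortedLT_sort S)
    · rwa [List.drop_left' hlen]
  · rintro ⟨u, p⟩ hy
    simp only [mem_sigma, Multiset.mem_toFinset, Multiset.mem_lists_iff, mem_cuts] at hy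
    obtain ⟨rfl, -, hp, hpu⟩ := hy
    have hval : (u.take p).toFinset.val = ↑(u.take p) := by
      rw [← sort_eq _ (· ≤ ·), List.sort_toFinset_of_isChain hp]
    simp only [mem_sigma, mem_univ, true_and, mem_ite, notMem_empty, imp_false, not_not,
      mem_avoiders, hval, Multiset.quot_mk_to_coe]
    have hsplit : (↑(u.take p) : Multiset α) + ↑(u.drop p) = ↑u := by
      rw [Multiset.coe_add, List.take_append_drop]
    rw [← hsplit, add_tsub_cancel_left]
    exact ⟨fun _ => ⟨rfl, hpu⟩, Multiset.le_add_right _ _⟩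
  · rintro ⟨S, w⟩ -
    have hlen : S.sort.length = #S := length_sort _
    simp [List.take_left' hlen, List.drop_left' hlen]
  · rintro ⟨u, p⟩ hy
    simp only [mem_sigma, mem_cuts] at hy
    obtain ⟨-, hpu, hp, -⟩ := hy
    have hsort := List.sort_toFinset_of_isChain hp
    have hcard : #(u.take p).toFinset = p := by
      rw [← length_sort (· ≤ ·), hsort, List.length_take, min_eq_left hpu]
    simp [hsort, hcard]

theorem sum_card_avoiders_mul_runWeight (hr : 2 ≤ r) (M : Multiset α) :
    ∑ S : Finset α,
        (if S.val ≤ M then (#(avoiders r (M - S.val)) : ℤ) * runWeight r #S else 0)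
      = if M = 0 then 1 else 0 := by
  classical
  calc _ = ∑ S : Finset α, ∑ w ∈ if S.val ≤ M then avoiders r (M - S.val) else ∅,
        runWeight r #S := sum_congr rfl fun S _ => by split_ifs <;> simp
    _ = ∑ y ∈ M.lists.toFinset.sigma (cuts r), runWeight r y.2 := by
      rw [sum_sigma', sum_avoiders_sigma_eq_sum_cuts_sigma]
    _ = ∑ u ∈ M.lists.toFinset, if u = [] then 1 else 0 := by
      rw [sum_sigma]
      exact sum_congr rfl fun u _ => sum_cuts_runWeight hr u
    _ = _ := by simp [Multiset.mem_lists_iff]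

end Arrangements

theorem esymm_combination_eq_sum_monomial {σ R : Type*} [Fintype σ] [CommRing R] {r : ℕ}
    (hr : 2 ≤ r) :
    (1 - esymm σ R 1 +
        ∑ m ∈ Icc 1 (Fintype.card σ), (esymm σ R (m * r) - esymm σ R (m * r + 1)))
      = ∑ S : Finset σ, monomial (∑ i ∈ S, Finsupp.single i 1) (runWeight r #S : R) := by
  set n := Fintype.card σ
  rw [sum_monomial_card_eq_sum_smul_esymm (fun k => (runWeight r k : R))]
  simp only [Int.cast_smul_eq_zsmul]
  calc _ = ∑ m ∈ range (n + 1), (esymm σ R (m * r) - esymm σ R (m * r + 1)) := by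
        rw [sum_range_succ', ← Ico_add_one_right_eq_Icc, sum_Ico_eq_sum_range]
        simp only [add_comm 1, zero_mul, zero_add, esymm_zero]
        abel
    _ = ∑ k ∈ range ((n + 1) * r), runWeight r k • esymm σ R k :=
        (sum_range_mul_runWeight_smul hr _ _).symm
    _ = _ := by
      refine (sum_subset (range_subset_range.mpr (by nlinarith)) fun k _ hkn => ?_).symm
      rw [esymm_eq_zero_of_card_lt (by simp only [mem_range, not_lt] at hkn; omega), smul_zero]

theorem wordAvoidCount_eq_card_avoiders (r n : ℕ) (d : Fin n →₀ ℕ) :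
    wordAvoidCount r n ⇑d = #(avoiders r (Finsupp.toMultiset d)) :=
  Nat.subtype_card _ fun w => by simp [mem_avoiders, Multiset.ext]

theorem coeff_wordAvoidGF {r n : ℕ} (d : Fin n →₀ ℕ) :
    MvPowerSeries.coeff d (wordAvoidGF r n) = wordAvoidCount r n ⇑d :=
  rfl

theorem coeff_wordAvoidGF_mul {r n : ℕ} (hr : 2 ≤ r) (d : Fin n →₀ ℕ) :
    MvPowerSeries.coeff d (wordAvoidGF r n *
        ((∑ S : Finset (Fin n),
            monomial (∑ i ∈ S, Finsupp.single i 1) (runWeight r #S : ℤ) :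
          MvPolynomial (Fin n) ℤ) : MvPowerSeries (Fin n) ℤ))
      = if d = 0 then 1 else 0 := by
  simp only [MvPowerSeries.coeff_mul_coe_sum_monomial, ← Finsupp.toMultiset_eq_zero,
    ← sum_card_avoiders_mul_runWeight hr]
  refine sum_congr rfl fun S _ => ?_
  simp only [← Finsupp.toMultiset_sum_single_one, Finsupp.toMultiset_le_toMultiset,
    ← Finsupp.toMultiset_tsub, ← wordAvoidCount_eq_card_avoiders, coeff_wordAvoidGF]

end Gessel

theorem gessel_theorem_general (n r : ℕ) (hr : 2 ≤ r) :
    wordAvoidGF r n *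
      ((1 - MvPolynomial.esymm (Fin n) ℤ 1 +
        ∑ m ∈ Finset.Icc 1 n,
          (MvPolynomial.esymm (Fin n) ℤ (m * r) -
            MvPolynomial.esymm (Fin n) ℤ (m * r + 1)) :
        MvPolynomial (Fin n) ℤ) : MvPowerSeries (Fin n) ℤ) = 1 := by
  have h := Gessel.esymm_combination_eq_sum_monomial (σ := Fin n) (R := ℤ) hr
  simp only [Fintype.card_fin, Int.cast_id] at h
  ext d
  rw [h, Gessel.coeff_wordAvoidGF_mul hr, MvPowerSeries.coeff_one]

/-- (Gessel) `F_r = 1/(1 - e_1 + ∑_{m ≥ 1} (e_{mr} - e_{mr+1}))`. -/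
theorem gessel_theorem (n r : ℕ) (hn : 1 ≤ n) (hr : 2 ≤ r) :
    wordAvoidGF r n *
      ((1 - MvPolynomial.esymm (Fin n) ℤ 1 +
        ∑ m ∈ Finset.Icc 1 n,
          (MvPolynomial.esymm (Fin n) ℤ (m * r) -
            MvPolynomial.esymm (Fin n) ℤ (m * r + 1)) :
        MvPolynomial (Fin n) ℤ) : MvPowerSeries (Fin n) ℤ) = 1 :=
  gessel_theorem_general n r hr
end

section
/- Define B_r(α,β) to be the number of words over an alphabet of α+β letters, where α specified letters each occur twice and β specified letters each occur once, avoiding the consecutive pattern 12...r. Then B_r(α,β) = α·B_r(α-1,β+1) + β·B_r(α,β-1) + Σ_{j≥1} (-1)^j Σ_{i_1+i_2 = k_j} C(α,i_1)·C(β,i_2)·B_r(α-i_1, β-i_2+i_1), where k_j runs through r, r+1, 2r, 2r+1, 3r, 3r+1, ... with alternating signs -,+,-,+,..., B_r(0,0)=1, and B_r is 0 on negative arguments. -/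
/-- `B_r(α,β) = f_r(2^α 1^β)`: the number of words over an alphabet of `α + β`
letters, the first `α` letters occurring twice and the remaining `β` letters
once, avoiding the consecutive pattern `1 2 ... r`. -/
noncomputable def B (r a b : ℕ) : ℕ :=
  wordAvoidCount r (a + b) (fun i => if (i : ℕ) < a then 2 else 1)

/-!
Let `M` be the length of the longest strictly increasing prefix of a nonempty word `w`. For
`k ≤ M`, the word `w` is an increasing prefix of length `k` followed by a word avoiding `1 2 ⋯ r`
exactly when `M < k + r` and the part of `w` after its first `M` letters avoids the pattern. Summed
over `k = 1, r, r + 1, 2r, 2r + 1, …` with alternating signs, these indicators telescope to the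
indicator that `w` avoids the pattern.

A word of content `2^a 1^b` whose first `k` letters increase is `E.sort ++ v`, where `E` is the set
of these letters and `v` avoids the pattern with content `2^a 1^b` minus `E`. Up to a relabelling
of the alphabet this content is `2^(a-i) 1^(b-(k-i)+i)`, `i` being the number of doubled letters in
`E`. Relabelling does not change the count: a word whose ascents lie in a set `S` is a concatenation
of weakly decreasing blocks cut out by `S`, so the number of such words only depends on the
multiset of multiplicities; Möbius inversion over `S` transfers this to words with a prescribed
ascent set, and avoidance only depends on the ascent set.
-/

open Finset
open scoped Classical

section Ascents

variable {α β : Type*} [LinearOrder α] [LinearOrder β] {r k i : ℕ} {u v w : List α}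

def AscAt (w : List α) (i : ℕ) : Prop := ∃ h : i + 1 < w.length, w[i] < w[i + 1]

lemma AscAt.lt_length (h : AscAt w i) : i + 1 < w.length := h.1

lemma ascAt_take : AscAt (w.take k) i ↔ i + 1 < k ∧ AscAt w i := by
  simp only [AscAt, List.length_take, List.getElem_take]
  constructor
  · rintro ⟨h, hlt⟩; exact ⟨by omega, by omega, hlt⟩
  · rintro ⟨hk, h, hlt⟩; exact ⟨by omega, hlt⟩

lemma ascAt_drop : AscAt (w.drop k) i ↔ AscAt w (k + i) := by
  simp only [AscAt, List.length_drop, List.getElem_drop, Nat.add_assoc]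
  exact ⟨fun ⟨h, hlt⟩ => ⟨by omega, hlt⟩, fun ⟨h, hlt⟩ => ⟨by omega, hlt⟩⟩

lemma ascAt_append_left (h : i + 1 < u.length) : AscAt (u ++ v) i ↔ AscAt u i := by
  simp only [AscAt, List.length_append, List.getElem_append_left (by omega : i < u.length),
    List.getElem_append_left h]
  exact ⟨fun ⟨_, hlt⟩ => ⟨h, hlt⟩, fun ⟨_, hlt⟩ => ⟨by omega, hlt⟩⟩

lemma ascAt_append_right (h : u.length ≤ i) : AscAt (u ++ v) i ↔ AscAt v (i - u.length) := by
  simp only [AscAt, List.length_append, List.getElem_append_right h,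
    List.getElem_append_right (by omega : u.length ≤ i + 1), Nat.sub_add_comm h]
  exact ⟨fun ⟨_, hlt⟩ => ⟨by omega, hlt⟩, fun ⟨_, hlt⟩ => ⟨by omega, hlt⟩⟩

lemma isChain_lt_iff_ascAt : w.IsChain (· < ·) ↔ ∀ i, i + 1 < w.length → AscAt w i := by
  rw [List.isChain_iff_getElem]
  exact ⟨fun h i hi => ⟨hi, h i hi⟩, fun h i hi => (h i hi).2⟩

lemma isChain_ge_iff_not_ascAt : w.IsChain (· ≥ ·) ↔ ∀ i, ¬ AscAt w i := by
  rw [List.isChain_iff_getElem]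
  exact ⟨fun h i ⟨hi, hlt⟩ => (h i hi).not_gt hlt,
    fun h i hi => not_lt.1 fun hlt => h i ⟨hi, hlt⟩⟩

def IncRunAt (r : ℕ) (w : List α) (i : ℕ) : Prop :=
  i + r ≤ w.length ∧ ∀ t, t + 1 < r → AscAt w (i + t)

lemma avoidsInc_iff_forall_not_incRunAt : AvoidsInc r w ↔ ∀ i, ¬ IncRunAt r w i := by
  have window : ∀ i, i + r ≤ w.length →
      (((w.drop i).take r).IsChain (· < ·) ↔ ∀ t, t + 1 < r → AscAt w (i + t)) := by
    intro i hi
    have hlen : ((w.drop i).take r).length = r := by simp; omega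
    rw [isChain_lt_iff_ascAt, hlen]
    exact forall_congr' fun t => imp_congr_right fun ht => by rw [ascAt_take, ascAt_drop]; simp [ht]
  constructor
  · rintro h i ⟨hi, hrun⟩
    exact h ⟨_, ((w.drop i).take_prefix r).isInfix.trans (w.drop_suffix i).isInfix,
      by simp; omega, (window i hi).2 hrun⟩
  · rintro h ⟨l, ⟨s, t, rfl⟩, rfl, hl⟩
    have hi : s.length + l.length ≤ (s ++ l ++ t).length := by simp
    have hl' : l.IsChain (· < ·) := hl
    refine h s.length ⟨hi, (window _ hi).1 ?_⟩
    simpa [List.drop_append, List.take_append] using hl'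

lemma avoidsInc_drop_iff (hk : k ≤ w.length) :
    AvoidsInc r (w.drop k) ↔ ∀ i, k ≤ i → ¬ IncRunAt r w i := by
  have hrun : ∀ i, IncRunAt r (w.drop k) i ↔ IncRunAt r w (k + i) := by
    intro i
    simp only [IncRunAt, ascAt_drop, List.length_drop, Nat.add_assoc]
    exact and_congr_left fun _ => by omega
  rw [avoidsInc_iff_forall_not_incRunAt]
  refine ⟨fun h i hi => ?_, fun h i => (hrun i).not.2 (h _ (Nat.le_add_right k i))⟩
  obtain ⟨j, rfl⟩ := Nat.exists_eq_add_of_le hi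
  exact (hrun j).not.1 (h j)

noncomputable def ascents (w : List α) : Finset ℕ := {i ∈ range w.length | AscAt w i}

lemma mem_ascents {i : ℕ} : i ∈ ascents w ↔ AscAt w i := by
  simpa [ascents] using fun h : AscAt w i => by have := h.lt_length; omega

lemma ascents_take_subset (k : ℕ) : ascents (w.take k) ⊆ ascents w := fun i hi => by
  rw [mem_ascents, ascAt_take] at hi
  exact mem_ascents.2 hi.2

lemma ascents_subset_range : ascents w ⊆ range w.length := filter_subset _ _

/-- The condition `AvoidsInc r` on a word of length `L`, read off its ascent set `T`. -/
def AscentsAvoid (r L : ℕ) (T : Finset ℕ) : Prop :=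
  ∀ i, i + r ≤ L → ∃ t, t + 1 < r ∧ i + t ∉ T

lemma avoidsInc_iff_ascentsAvoid : AvoidsInc r w ↔ AscentsAvoid r w.length (ascents w) := by
  simp [avoidsInc_iff_forall_not_incRunAt, IncRunAt, mem_ascents, AscentsAvoid]

lemma avoidsInc_map {f : α → β} (hf : StrictMono f) :
    AvoidsInc r (w.map f) ↔ AvoidsInc r w := by
  simp [avoidsInc_iff_forall_not_incRunAt, IncRunAt, AscAt, hf.lt_iff_lt]

end Ascents

section IncPrefix

variable {α : Type*} [LinearOrder α] {r k i : ℕ} {w : List α}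

def IncPrefixAvoids (r k : ℕ) (w : List α) : Prop :=
  k ≤ w.length ∧ (w.take k).IsChain (· < ·) ∧ AvoidsInc r (w.drop k)

noncomputable def incPrefixLength (w : List α) : ℕ :=
  Nat.findGreatest (fun m => ∀ i, i + 1 < m → AscAt w i) w.length

lemma incPrefixLength_le : incPrefixLength w ≤ w.length := Nat.findGreatest_le _

lemma le_incPrefixLength_iff (hk : k ≤ w.length) :
    k ≤ incPrefixLength w ↔ ∀ i, i + 1 < k → AscAt w i := by
  refine ⟨fun h i hi => ?_, fun h => Nat.le_findGreatest hk h⟩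
  exact Nat.findGreatest_spec (P := fun m => ∀ i, i + 1 < m → AscAt w i) (n := w.length)
    (Nat.zero_le _) (fun i hi => by omega) i (by unfold incPrefixLength at h; omega)

lemma incRunAt_iff_of_lt_incPrefixLength (hi : i < incPrefixLength w) :
    IncRunAt r w i ↔ i + r ≤ incPrefixLength w := by
  set M := incPrefixLength w
  have hML : M ≤ w.length := incPrefixLength_le
  have hasc := (le_incPrefixLength_iff hML).1 le_rfl
  refine ⟨fun ⟨hlen, hrun⟩ => ?_, fun h => ⟨by omega, fun t ht => hasc _ (by omega)⟩⟩
  by_contra! hlt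
  have hstop : AscAt w (M - 1) := by
    have := hrun (M - 1 - i) (by omega)
    rwa [show i + (M - 1 - i) = M - 1 by omega] at this
  -- an ascent at `M - 1` would extend the increasing prefix
  have : M + 1 ≤ M := (le_incPrefixLength_iff (k := M + 1) (by omega)).2 fun j hj =>
    if hjM : j + 1 < M then hasc j hjM else by rwa [show j = M - 1 by omega]
  omega

lemma incPrefixAvoids_iff (hr : 0 < r) :
    IncPrefixAvoids r k w ↔ k ≤ incPrefixLength w ∧ incPrefixLength w < k + r ∧
      AvoidsInc r (w.drop (incPrefixLength w)) := by
  have hML := incPrefixLength_le (w := w)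
  have hprefix : k ≤ w.length → ((w.take k).IsChain (· < ·) ↔ k ≤ incPrefixLength w) := by
    intro hk
    rw [le_incPrefixLength_iff hk, isChain_lt_iff_ascAt]
    simp only [ascAt_take, List.length_take]
    exact forall_congr' fun j =>
      ⟨fun h hj => (h (by omega)).2, fun h hj => ⟨by omega, h (by omega)⟩⟩
  unfold IncPrefixAvoids
  constructor
  · rintro ⟨hk, hch, hav⟩
    have hkM := (hprefix hk).1 hch
    rw [avoidsInc_drop_iff hk] at hav
    refine ⟨hkM, ?_, (avoidsInc_drop_iff hML).2 fun j hj => hav j (by omega)⟩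
    by_contra! hle
    exact hav k le_rfl ((incRunAt_iff_of_lt_incPrefixLength (by omega)).2 hle)
  · rintro ⟨hkM, hMk, hav⟩
    refine ⟨by omega, (hprefix (by omega)).2 hkM,
      (avoidsInc_drop_iff (by omega)).2 fun j hj => ?_⟩
    rcases lt_or_ge j (incPrefixLength w) with hjM | hjM
    · rw [incRunAt_iff_of_lt_incPrefixLength hjM]; omega
    · exact (avoidsInc_drop_iff hML).1 hav j hjM

lemma incPrefixAvoids_zero : IncPrefixAvoids r 0 w ↔ AvoidsInc r w := by
  simp [IncPrefixAvoids]

lemma sum_Icc_indicator_window {r M J : ℕ} (hr : 0 < r) (hM : M < J * r + r) :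
    ∑ j ∈ Icc 1 J, (if j * r ≤ M ∧ M < j * r + r then 1 else 0 : ℤ) =
      if r ≤ M then 1 else 0 := by
  have hwin : ∀ j, (j * r ≤ M ∧ M < j * r + r) ↔ M / r = j := fun j => by
    rw [← Nat.le_div_iff_mul_le hr, show j * r + r = (j + 1) * r by ring,
      ← Nat.div_lt_iff_lt_mul hr]
    omega
  simp only [hwin, sum_ite_eq, mem_Icc, Nat.one_le_div_iff hr]
  have : M / r ≤ J := Nat.lt_succ_iff.1 ((Nat.div_lt_iff_lt_mul hr).2 (by linarith))
  simp [this]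

lemma indicator_lt_eq_alternating_sum {r M J : ℕ} (hr : 0 < r) (hM : 1 ≤ M)
    (hMJ : M ≤ J * r) :
    (if M < r then 1 else 0 : ℤ) =
      (if 1 ≤ M ∧ M < 1 + r then 1 else 0) +
        ∑ j ∈ Icc 1 J, (-(if j * r ≤ M ∧ M < j * r + r then 1 else 0) +
          (if j * r + 1 ≤ M ∧ M < j * r + 1 + r then 1 else 0)) := by
  have hshift : ∀ j,
      (j * r + 1 ≤ M ∧ M < j * r + 1 + r) ↔ (j * r ≤ M - 1 ∧ M - 1 < j * r + r) :=
    fun j => by omega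
  simp only [hshift, sum_add_distrib, sum_neg_distrib]
  rw [sum_Icc_indicator_window hr (by omega), sum_Icc_indicator_window hr (by omega)]
  split_ifs <;> omega

lemma avoidsInc_indicator_eq (hr : 0 < r) (J : ℕ) (hw : 1 ≤ w.length)
    (hJ : w.length ≤ J * r) :
    (if AvoidsInc r w then 1 else 0 : ℤ) =
      (if IncPrefixAvoids r 1 w then 1 else 0) +
        ∑ j ∈ Icc 1 J, (-(if IncPrefixAvoids r (j * r) w then 1 else 0) +
          (if IncPrefixAvoids r (j * r + 1) w then 1 else 0)) := by
  have hM : 1 ≤ incPrefixLength w := (le_incPrefixLength_iff hw).2 fun i hi => by omega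
  simp only [← incPrefixAvoids_zero (r := r) (w := w), incPrefixAvoids_iff hr, Nat.zero_le,
    true_and, zero_add]
  by_cases htail : AvoidsInc r (w.drop (incPrefixLength w))
  · simp only [htail, and_true]
    exact indicator_lt_eq_alternating_sum hr hM (incPrefixLength_le.trans hJ)
  · simp [htail]

lemma count_sort (E : Finset α) (a : α) :
    (E.sort (· ≤ ·)).count a = if a ∈ E then 1 else 0 := by
  split_ifs with ha
  · exact List.count_eq_one_of_mem (E.sort_nodup _) ((mem_sort _).2 ha)
  · exact List.count_eq_zero.2 fun h => ha ((mem_sort _).1 h)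

lemma take_eq_sort_of_incPrefixAvoids {w : List α} (hw : IncPrefixAvoids r k w) :
    w.take k = (w.take k).toFinset.sort (· ≤ ·) := by
  have hsorted : (w.take k).Pairwise (· < ·) := hw.2.1.pairwise
  exact ((List.toFinset_sort (· ≤ ·) hsorted.nodup).2 (hsorted.imp le_of_lt)).symm

end IncPrefix

section Words

variable {α : Type*} [LinearOrder α] [Fintype α] {m : α → ℕ} {w : List α}

noncomputable def content (m : α → ℕ) : Multiset α := ∑ a, Multiset.replicate (m a) a

lemma count_content (m : α → ℕ) (a : α) : (content m).count a = m a := by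
  simp [content, Multiset.count_sum', Multiset.count_replicate]

noncomputable def words (m : α → ℕ) : Finset (List α) := (content m).lists.toFinset

lemma mem_words_iff_coe : w ∈ words m ↔ (w : Multiset α) = content m := by
  simp [words, eq_comm]

lemma mem_words : w ∈ words m ↔ ∀ a, w.count a = m a := by
  simp [mem_words_iff_coe, Multiset.ext, count_content]

lemma length_of_mem_words (hw : w ∈ words m) : w.length = ∑ a, m a := by
  simpa [content, Multiset.card_sum] using congrArg Multiset.card (mem_words_iff_coe.1 hw)

noncomputable def avoidCount (r : ℕ) (m : α → ℕ) : ℕ := #{w ∈ words m | AvoidsInc r w}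

lemma wordAvoidCount_eq_avoidCount (r n : ℕ) (m : Fin n → ℕ) :
    wordAvoidCount r n m = avoidCount r m := by
  rw [wordAvoidCount, avoidCount, ← Nat.card_eq_finsetCard]
  exact Nat.card_congr (Equiv.subtypeEquivRight fun w => by simp [mem_words])

noncomputable def descWord (m : α → ℕ) : List α := (content m).sort (· ≥ ·)

lemma descWord_mem_words : descWord m ∈ words m :=
  mem_words_iff_coe.2 (Multiset.sort_eq _ _)

lemma not_ascAt_descWord (i : ℕ) : ¬ AscAt (descWord m) i :=
  isChain_ge_iff_not_ascAt.1 (Multiset.pairwise_sort _ _).isChain i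

lemma eq_descWord_of_forall_not_ascAt (hw : w ∈ words m) (h : ∀ i, ¬ AscAt w i) :
    w = descWord m := by
  refine List.Perm.eq_of_pairwise' (r := (· ≥ ·))
    (isChain_ge_iff_not_ascAt.2 h).pairwise (Multiset.pairwise_sort _ _) ?_
  rw [← Multiset.coe_eq_coe, descWord, Multiset.sort_eq, mem_words_iff_coe.1 hw]

end Words

section AscentSets

variable {α : Type*} [LinearOrder α] [Fintype α] {m : α → ℕ} {w : List α} {S : Finset ℕ}

lemma card_ascents_subset_eq_one (h : ∀ i ∈ S, ∑ a, m a ≤ i + 1) :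
    #{w ∈ words m | ascents w ⊆ S} = 1 := by
  rw [card_eq_one]
  refine ⟨descWord m, ext fun w => ?_⟩
  simp only [mem_filter, mem_singleton]
  constructor
  · rintro ⟨hw, hS⟩
    refine eq_descWord_of_forall_not_ascAt hw fun i hi => ?_
    have := h i (hS (mem_ascents.2 hi))
    have := hi.lt_length
    have := length_of_mem_words hw
    omega
  · rintro rfl
    exact ⟨descWord_mem_words, fun i hi => absurd (mem_ascents.1 hi) (not_ascAt_descWord i)⟩

noncomputable def subContents (m : α → ℕ) (l : ℕ) : Finset (α → ℕ) :=
  {m₁ ∈ Fintype.piFinset fun a => range (m a + 1) | ∑ a, m₁ a = l}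

lemma mem_subContents {m₁ : α → ℕ} {l : ℕ} :
    m₁ ∈ subContents m l ↔ (∀ a, m₁ a ≤ m a) ∧ ∑ a, m₁ a = l := by
  simp [subContents]

lemma ascents_append_descWord_subset {v : List α} {i₀ : ℕ} (m' : α → ℕ)
    (hv : v.length = i₀ + 1) (hvS : ascents v ⊆ S) (hi₀ : i₀ ∈ S) :
    ascents (v ++ descWord m') ⊆ S := by
  intro i hi
  rw [mem_ascents] at hi
  rcases lt_trichotomy i i₀ with hlt | rfl | hgt
  · exact hvS (mem_ascents.2 ((ascAt_append_left (by omega)).1 hi))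
  · exact hi₀
  · exact absurd ((ascAt_append_right (by omega)).1 hi) (not_ascAt_descWord _)

lemma drop_eq_descWord {i₀ : ℕ} (hw : w ∈ words m) (hwS : ascents w ⊆ S)
    (hmax : ∀ i ∈ S, i₀ < i → ∑ a, m a ≤ i + 1) :
    w.drop (i₀ + 1) = descWord fun a => m a - (w.take (i₀ + 1)).count a := by
  refine eq_descWord_of_forall_not_ascAt (mem_words.2 fun a => ?_) fun t ht => ?_
  · have := congrArg (List.count a) (List.take_append_drop (i₀ + 1) w)
    rw [List.count_append, mem_words.1 hw a] at this
    omega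
  · rw [ascAt_drop] at ht
    have := hmax _ (hwS (mem_ascents.2 ht)) (by omega)
    have := ht.lt_length
    have := length_of_mem_words hw
    omega

lemma card_ascents_subset_eq_sum {i₀ : ℕ} (hi₀S : i₀ ∈ S) (hi₀ : i₀ < ∑ a, m a)
    (hmax : ∀ i ∈ S, i₀ < i → ∑ a, m a ≤ i + 1) :
    #{w ∈ words m | ascents w ⊆ S} =
      ∑ m₁ ∈ subContents m (i₀ + 1), #{v ∈ words m₁ | ascents v ⊆ S} := by
  rw [← card_sigma]
  refine card_nbij' (fun w => ⟨fun a => (w.take (i₀ + 1)).count a, w.take (i₀ + 1)⟩)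
    (fun p => p.2 ++ descWord fun a => m a - p.1 a) ?_ ?_ ?_ ?_
  · intro w hw
    rw [mem_coe, mem_filter] at hw
    have hlen := length_of_mem_words hw.1
    rw [mem_coe, mem_sigma, mem_subContents, mem_filter, mem_words]
    refine ⟨⟨fun a => ?_, ?_⟩, fun a => rfl, (ascents_take_subset _).trans hw.2⟩
    · exact (mem_words.1 hw.1 a) ▸ ((w.take_sublist _).count_le a)
    · simp_rw [← length_of_mem_words (m := fun a => (w.take (i₀ + 1)).count a)
        (mem_words.2 fun a => rfl), List.length_take]
      omega
  · rintro ⟨m₁, v⟩ hp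
    rw [mem_coe, mem_sigma, mem_subContents, mem_filter] at hp
    dsimp only at hp ⊢
    obtain ⟨⟨hle, hsum⟩, hv, hvS⟩ := hp
    rw [mem_coe, mem_filter, mem_words]
    simp only [List.count_append]
    refine ⟨fun a => ?_, ascents_append_descWord_subset _ (by rw [length_of_mem_words hv, hsum])
      hvS hi₀S⟩
    rw [mem_words.1 hv, mem_words.1 descWord_mem_words]
    have := hle a
    omega
  · intro w hw
    rw [mem_coe, mem_filter] at hw
    dsimp only
    rw [← drop_eq_descWord hw.1 hw.2 hmax, List.take_append_drop]
  · rintro ⟨m₁, v⟩ hp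
    rw [mem_coe, mem_sigma, mem_subContents, mem_filter] at hp
    obtain ⟨⟨-, hsum⟩, hv, -⟩ := hp
    have htake : (v ++ descWord fun a => m a - m₁ a).take (i₀ + 1) = v :=
      List.take_left' (by rw [length_of_mem_words hv, hsum])
    simp only [htake, (mem_words.1 hv)]

end AscentSets

section Relabel

variable {α β : Type*} [LinearOrder α] [Fintype α] [LinearOrder β] [Fintype β] {r : ℕ}

lemma card_ascents_subset_comp_equiv (e : α ≃ β) (m : β → ℕ) (S : Finset ℕ) :
    #{w ∈ words (m ∘ e) | ascents w ⊆ S} = #{w ∈ words m | ascents w ⊆ S} := by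
  induction hL : ∑ b, m b using Nat.strong_induction_on generalizing m with
  | _ L ih =>
  have hsum : ∑ a, (m ∘ e) a = L := (e.sum_comp m).trans hL
  rcases {i ∈ S | i + 2 ≤ L}.eq_empty_or_nonempty with hR | hR
  · have hS : ∀ i ∈ S, L ≤ i + 1 := fun i hi => by
      by_contra! hlt
      exact (filter_eq_empty_iff.1 hR) hi (by omega)
    rw [card_ascents_subset_eq_one (hsum ▸ hS), card_ascents_subset_eq_one (hL ▸ hS)]
  · set i₀ := {i ∈ S | i + 2 ≤ L}.max' hR
    have hi₀ := mem_filter.1 ({i ∈ S | i + 2 ≤ L}.max'_mem hR)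
    have hmax : ∀ i ∈ S, i₀ < i → L ≤ i + 1 := fun i hi hlt => by
      by_contra! hle
      exact hlt.not_ge (le_max' _ i (mem_filter.2 ⟨hi, by omega⟩))
    rw [card_ascents_subset_eq_sum hi₀.1 (by omega) (by rwa [hsum]),
      card_ascents_subset_eq_sum hi₀.1 (by omega) (by rwa [hL])]
    refine sum_nbij' (· ∘ e.symm) (· ∘ e) (fun m₁ hm₁ => ?_) (fun m₁ hm₁ => ?_)
      (fun m₁ _ => by ext; simp) (fun m₁ _ => by ext; simp) (fun m₁ hm₁ => ?_)
    · rw [mem_subContents] at hm₁ ⊢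
      exact ⟨fun b => by simpa using hm₁.1 (e.symm b), (e.symm.sum_comp m₁).trans hm₁.2⟩
    · rw [mem_subContents] at hm₁ ⊢
      exact ⟨fun a => hm₁.1 (e a), (e.sum_comp m₁).trans hm₁.2⟩
    · rw [mem_subContents] at hm₁
      have := ih (i₀ + 1) (by omega) (m₁ ∘ e.symm) ((e.symm.sum_comp m₁).trans hm₁.2)
      rwa [Function.comp_assoc, e.symm_comp_self, Function.comp_id] at this

lemma eq_of_sum_powerset_eq {ι M : Type*} [DecidableEq ι] [AddCancelCommMonoid M]
    {f g : Finset ι → M} (h : ∀ S : Finset ι, ∑ T ∈ S.powerset, f T = ∑ T ∈ S.powerset, g T)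
    (S : Finset ι) :
    f S = g S := by
  induction S using Finset.strongInduction with
  | H S ih =>
  have hS := h S
  rw [← sum_erase_add _ _ (mem_powerset_self S), ← sum_erase_add _ _ (mem_powerset_self S),
    sum_congr rfl fun T hT => ih T (Finset.ssubset_iff_subset_ne.2
      ⟨mem_powerset.1 (mem_of_mem_erase hT), ne_of_mem_erase hT⟩)] at hS
  exact add_left_cancel hS

lemma card_ascents_subset_eq_sum_card_ascents_eq (m : α → ℕ) (S : Finset ℕ) :
    #{w ∈ words m | ascents w ⊆ S} =
      ∑ T ∈ S.powerset, #{w ∈ words m | ascents w = T} := by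
  rw [card_eq_sum_card_fiberwise (f := ascents) (t := S.powerset) fun w hw => by
    simpa using (mem_filter.1 hw).2]
  simp_rw [filter_filter]
  refine sum_congr rfl fun T hT => congrArg card (filter_congr fun w _ => ?_)
  exact ⟨fun h => h.2, fun h => ⟨h ▸ mem_powerset.1 hT, h⟩⟩

lemma card_ascents_eq_comp_equiv (e : α ≃ β) (m : β → ℕ) (T : Finset ℕ) :
    #{w ∈ words (m ∘ e) | ascents w = T} = #{w ∈ words m | ascents w = T} :=
  eq_of_sum_powerset_eq (f := fun T => #{w ∈ words (m ∘ e) | ascents w = T})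
    (g := fun T => #{w ∈ words m | ascents w = T}) (fun S => by
      simp only [← card_ascents_subset_eq_sum_card_ascents_eq, card_ascents_subset_comp_equiv]) T

lemma card_filter_ascents_eq_sum (m : α → ℕ) (Q : Finset ℕ → Prop) :
    #{w ∈ words m | Q (ascents w)} =
      ∑ T ∈ (range (∑ a, m a)).powerset,
        if Q T then #{w ∈ words m | ascents w = T} else 0 := by
  rw [card_eq_sum_card_fiberwise (f := ascents) (t := (range (∑ a, m a)).powerset) fun w hw => by
    rw [mem_coe, mem_powerset, ← length_of_mem_words (mem_filter.1 hw).1]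
    exact ascents_subset_range]
  refine sum_congr rfl fun T _ => ?_
  split_ifs with hQ
  · rw [filter_filter]
    exact congrArg card (filter_congr fun w _ => ⟨fun h => h.2, fun h => ⟨h ▸ hQ, h⟩⟩)
  · rw [filter_filter, card_eq_zero, filter_eq_empty_iff]
    exact fun w _ h => hQ (h.2 ▸ h.1)

lemma avoidCount_eq_card_ascentsAvoid (m : α → ℕ) :
    avoidCount r m = #{w ∈ words m | AscentsAvoid r (∑ a, m a) (ascents w)} :=
  congrArg card (filter_congr fun w hw => by
    rw [avoidsInc_iff_ascentsAvoid, length_of_mem_words hw])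

lemma avoidCount_comp_equiv (e : α ≃ β) (m : β → ℕ) :
    avoidCount r (m ∘ e) = avoidCount r m := by
  rw [avoidCount_eq_card_ascentsAvoid, avoidCount_eq_card_ascentsAvoid, card_filter_ascents_eq_sum,
    card_filter_ascents_eq_sum, show ∑ a, (m ∘ e) a = ∑ b, m b from e.sum_comp m]
  simp only [card_ascents_eq_comp_equiv]

lemma avoidCount_comp_strictMono {f : α → β} (hf : StrictMono f) {m : β → ℕ}
    (hm : ∀ b ∉ Set.range f, m b = 0) : avoidCount r (m ∘ f) = avoidCount r m := by
  have hcount : ∀ w : List α, w ∈ words (m ∘ f) ↔ w.map f ∈ words m := fun w => by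
    simp only [mem_words]
    refine ⟨fun h b => ?_, fun h a => by
      rw [Function.comp_apply, ← h, List.count_map_of_injective _ _ hf.injective]⟩
    by_cases hb : b ∈ Set.range f
    · obtain ⟨a, rfl⟩ := hb
      rw [List.count_map_of_injective _ _ hf.injective, h]; rfl
    · rw [hm b hb, List.count_eq_zero]
      exact fun hmem => hb (by obtain ⟨a, -, rfl⟩ := List.mem_map.1 hmem; exact ⟨a, rfl⟩)
  refine card_nbij (List.map f) (fun w hw => ?_) (List.map_injective_iff.2 hf.injective).injOn
    fun v hv => ?_
  · rw [mem_coe, mem_filter] at hw ⊢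
    exact ⟨(hcount w).1 hw.1, (avoidsInc_map hf).2 hw.2⟩
  · rw [mem_coe, mem_filter] at hv
    have hrange : v ∈ Set.range (List.map f) := by
      rw [Set.range_list_map]
      intro b hb
      by_contra hnot
      have := mem_words.1 hv.1 b
      rw [hm b hnot, List.count_eq_zero] at this
      exact this hb
    obtain ⟨w, rfl⟩ := hrange
    exact ⟨w, by rw [mem_coe, mem_filter, hcount, ← avoidsInc_map hf]; exact hv, rfl⟩

lemma card_filter_eq_zero_eq {ι : Type*} [Fintype ι] {f g : ι → ℕ}
    (h : ∀ c ≠ 0, #{i | f i = c} = #{i | g i = c}) : #{i | f i = 0} = #{i | g i = 0} := by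
  set N := ∑ i, f i + ∑ i, g i
  have hne : ∀ f' : ι → ℕ, (∀ i, f' i ≤ N) →
      #{i | ¬ f' i = 0} = ∑ c ∈ (range (N + 1)).erase 0, #{i | f' i = c} := fun f' hf' => by
    rw [card_eq_sum_card_fiberwise (f := f') (t := (range (N + 1)).erase 0) fun i hi => by
      rw [mem_coe, mem_filter] at hi
      rw [mem_coe, mem_erase, mem_range]
      exact ⟨hi.2, by have := hf' i; omega⟩]
    refine sum_congr rfl fun c hc => ?_
    rw [filter_filter]
    exact congrArg card (filter_congr fun i _ =>
      ⟨fun h => h.2, fun h => ⟨h ▸ ne_of_mem_erase hc, h⟩⟩)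
  have hle : ∀ i, f i ≤ N ∧ g i ≤ N := fun i =>
    ⟨(single_le_sum (fun _ _ => Nat.zero_le _) (mem_univ i)).trans (Nat.le_add_right _ _),
      (single_le_sum (fun _ _ => Nat.zero_le _) (mem_univ i)).trans (Nat.le_add_left _ _)⟩
  have hf := hne f fun i => (hle i).1
  have hg := hne g fun i => (hle i).2
  rw [sum_congr rfl fun c hc => h c (ne_of_mem_erase hc), ← hg] at hf
  have := card_filter_add_card_filter_not (s := univ) fun i => f i = 0
  have := card_filter_add_card_filter_not (s := univ) fun i => g i = 0
  omega

lemma avoidCount_eq_of_forall_card_fiber_eq {m m' : α → ℕ}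
    (h : ∀ c, #{a | m a = c} = #{a | m' a = c}) : avoidCount r m = avoidCount r m' := by
  let e : α ≃ α := Equiv.ofFiberEquiv (f := m) (g := m') fun c =>
    Fintype.equivOfCardEq (by simpa only [Fintype.card_subtype] using h c)
  have he : m' ∘ e = m := funext fun a => Equiv.ofFiberEquiv_map _ a
  rw [← he, avoidCount_comp_equiv]

lemma avoidCount_eq_of_card_fiber_eq {n n' : ℕ} {m : Fin n → ℕ} {m' : Fin n' → ℕ}
    (h : ∀ c ≠ 0, #{j | m j = c} = #{j | m' j = c}) : avoidCount r m = avoidCount r m' := by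
  wlog hn : n ≤ n' generalizing n n'
  · exact (this (fun c hc => (h c hc).symm) (le_of_not_ge hn)).symm
  let p : Fin n' → ℕ := fun j => if hj : (j : ℕ) < n then m ⟨j, hj⟩ else 0
  have hpm : p ∘ Fin.castLE hn = m := funext fun j => by simp [p]
  have hp0 : ∀ j ∉ Set.range (Fin.castLE hn), p j = 0 := fun j hj =>
    dif_neg fun hjn => hj ⟨⟨j, hjn⟩, rfl⟩
  have hfib : ∀ c ≠ 0, #{j | p j = c} = #{j | m' j = c} := fun c hc => by
    rw [← h c hc, ← card_map (Fin.castLEEmb hn)]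
    congr 1
    ext j
    simp only [mem_filter, mem_univ, true_and, mem_map, Fin.castLEEmb_apply, p]
    constructor
    · intro hj
      have hjn : (j : ℕ) < n := by by_contra hjn; simp [hjn] at hj; omega
      exact ⟨⟨j, hjn⟩, by simpa [hjn] using hj, rfl⟩
    · rintro ⟨i, rfl, rfl⟩
      simp
  rw [← hpm, avoidCount_comp_strictMono (Fin.strictMono_castLE hn) hp0]
  exact avoidCount_eq_of_forall_card_fiber_eq fun c =>
    if hc : c = 0 then hc ▸ card_filter_eq_zero_eq hfib else hfib c hc

end Relabel

section PrefixCount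

variable {α : Type*} [LinearOrder α] [Fintype α] {r k : ℕ} {m : α → ℕ}

lemma card_incPrefixAvoids_fiber {E : Finset α} (hE : E ∈ powersetCard k {a | 0 < m a}) :
    #{w ∈ words m | IncPrefixAvoids r k w ∧ (w.take k).toFinset = E} =
      avoidCount r (fun a => m a - if a ∈ E then 1 else 0) := by
  rw [mem_powersetCard] at hE
  have hlen : (E.sort (· ≤ ·)).length = k := by rw [length_sort, hE.2]
  have hpos : ∀ a ∈ E, 0 < m a := fun a ha => by simpa using hE.1 ha
  symm
  refine card_nbij' (fun v => E.sort (· ≤ ·) ++ v) (fun w => w.drop k) (fun v hv => ?_)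
    (fun w hw => ?_) (fun v _ => List.drop_left' hlen) (fun w hw => ?_)
  · rw [mem_coe, mem_filter, mem_words] at hv
    rw [mem_coe, mem_filter, mem_words]
    refine ⟨fun a => ?_, ⟨by rw [List.length_append, hlen]; omega, ?_, ?_⟩, ?_⟩
    · rw [List.count_append, count_sort, hv.1 a]
      split_ifs with ha
      · have := hpos a ha
        omega
      · omega
    · rw [List.take_left' hlen]
      exact (E.sortedLT_sort).isChain
    · rw [List.drop_left' hlen]
      exact hv.2
    · rw [List.take_left' hlen, sort_toFinset]
  · rw [mem_coe, mem_filter] at hw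
    obtain ⟨hwm, hw, rfl⟩ := hw
    rw [mem_coe, mem_filter, mem_words]
    refine ⟨fun a => ?_, hw.2.2⟩
    have := congrArg (List.count a) (List.take_append_drop k w)
    rw [List.count_append, mem_words.1 hwm a, take_eq_sort_of_incPrefixAvoids hw,
      count_sort] at this
    dsimp only
    split_ifs at this ⊢ <;> omega
  · rw [mem_coe, mem_filter] at hw
    obtain ⟨-, hw, rfl⟩ := hw
    dsimp only
    rw [← take_eq_sort_of_incPrefixAvoids hw, List.take_append_drop]

lemma card_incPrefixAvoids (m : α → ℕ) (k : ℕ) :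
    #{w ∈ words m | IncPrefixAvoids r k w} =
      ∑ E ∈ powersetCard k {a | 0 < m a},
        avoidCount r (fun a => m a - if a ∈ E then 1 else 0) := by
  rw [card_eq_sum_card_fiberwise (f := fun w => (w.take k).toFinset)
    (t := powersetCard k {a | 0 < m a}) fun w hw => ?_]
  · simp_rw [filter_filter]
    exact sum_congr rfl fun E hE => card_incPrefixAvoids_fiber hE
  · rw [mem_coe, mem_filter] at hw
    rw [mem_coe, mem_powersetCard]
    refine ⟨fun a ha => ?_, ?_⟩
    · have := List.count_pos_iff.2 (List.mem_of_mem_take (List.mem_toFinset.1 ha))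
      rw [mem_words.1 hw.1] at this
      simpa using this
    · rw [List.toFinset_card_of_nodup hw.2.2.1.pairwise.nodup, List.length_take]
      exact min_eq_left hw.2.1

end PrefixCount

section Binomial

variable {ι : Type*} [Fintype ι] [DecidableEq ι]

lemma card_powersetCard_filter_card_inter (A : Finset ι) {k i : ℕ} (hi : i ≤ k) :
    #{E ∈ powersetCard k univ | #(E ∩ A) = i} = (#A).choose i * (#Aᶜ).choose (k - i) := by
  rw [← card_powersetCard, ← card_powersetCard, ← card_product]
  refine card_nbij' (fun E => (E ∩ A, E \ A)) (fun p => p.1 ∪ p.2) (fun E hE => ?_)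
    (fun p hp => ?_) (fun E _ => sup_inf_sdiff E A) (fun p hp => ?_)
  · rw [mem_coe, mem_filter, mem_powersetCard] at hE
    simp only [mem_coe, mem_product, mem_powersetCard]
    have := card_inter_add_card_sdiff E A
    exact ⟨⟨inter_subset_right, hE.2⟩, fun x hx => by simp [(mem_sdiff.1 hx).2], by omega⟩
  · rw [mem_coe, mem_product, mem_powersetCard, mem_powersetCard] at hp
    obtain ⟨⟨hPA, hP⟩, hQA, hQ⟩ := hp
    dsimp only
    have hdisj : Disjoint p.1 p.2 := disjoint_of_subset_left hPA
      (disjoint_of_subset_right hQA disjoint_compl_right)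
    rw [mem_coe, mem_filter, mem_powersetCard, card_union_of_disjoint hdisj, hP, hQ,
      union_inter_distrib_right, inter_eq_left.2 hPA,
      disjoint_iff_inter_eq_empty.1 (disjoint_of_subset_right hQA disjoint_compl_right).symm,
      union_empty]
    exact ⟨⟨subset_univ _, by omega⟩, hP⟩
  · rw [mem_coe, mem_product, mem_powersetCard, mem_powersetCard] at hp
    obtain ⟨⟨hPA, -⟩, hQA, -⟩ := hp
    ext x
    · simp only [mem_inter, mem_union]
      exact ⟨fun h => h.1.resolve_right fun hx => mem_compl.1 (hQA hx) h.2,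
        fun h => ⟨.inl h, hPA h⟩⟩
    · simp only [mem_sdiff, mem_union]
      exact ⟨fun h => h.1.resolve_left fun hx => h.2 (hPA hx),
        fun h => ⟨.inr h, mem_compl.1 (hQA h)⟩⟩

lemma sum_powersetCard_eq_sum_choose {M : Type*} [AddCommMonoid M] (A : Finset ι) (k : ℕ)
    (f : ℕ → M) :
    ∑ E ∈ powersetCard k univ, f #(E ∩ A) =
      ∑ i ∈ range (k + 1), ((#A).choose i * (#Aᶜ).choose (k - i)) • f i := by
  rw [← sum_fiberwise_of_maps_to (g := fun E => #(E ∩ A)) (t := range (k + 1)) fun E hE =>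
    mem_range.2 (Nat.lt_succ_of_le ((card_le_card inter_subset_left).trans
      (mem_powersetCard.1 hE).2.le))]
  refine sum_congr rfl fun i hi => ?_
  rw [sum_congr rfl fun E hE => by rw [(mem_filter.1 hE).2], sum_const,
    card_powersetCard_filter_card_inter A (Nat.lt_succ_iff.1 (mem_range.1 hi))]

end Binomial

section TwoOne

variable {r : ℕ}

/-- The content `2^a 1^b` counted by `B r a b`. -/
def twoOneContent (a b : ℕ) : Fin (a + b) → ℕ := fun i => if (i : ℕ) < a then 2 else 1

def doubledLetters (a b : ℕ) : Finset (Fin (a + b)) := {j | (j : ℕ) < a}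

lemma mem_doubledLetters {a b : ℕ} {j : Fin (a + b)} :
    j ∈ doubledLetters a b ↔ (j : ℕ) < a := by
  simp [doubledLetters]

lemma B_eq_avoidCount (r a b : ℕ) : B r a b = avoidCount r (twoOneContent a b) :=
  wordAvoidCount_eq_avoidCount _ _ _

lemma card_doubledLetters (a b : ℕ) : #(doubledLetters a b) = a := by
  simp [doubledLetters, Fin.card_filter_val_lt]

lemma card_doubledLetters_compl (a b : ℕ) : #(doubledLetters a b)ᶜ = b := by
  rw [card_compl, card_doubledLetters, Fintype.card_fin]
  omega

lemma card_twoOneContent_fiber (a b c : ℕ) :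
    #{j | twoOneContent a b j = c} = if c = 2 then a else if c = 1 then b else 0 := by
  have hfib : ({j | twoOneContent a b j = c} : Finset _) =
      if c = 2 then doubledLetters a b else if c = 1 then (doubledLetters a b)ᶜ else ∅ := by
    ext j
    simp only [mem_filter, mem_univ, true_and]
    by_cases hja : (j : ℕ) < a <;> split_ifs <;> simp [twoOneContent, mem_doubledLetters, hja] <;>
      omega
  rw [hfib]
  split_ifs
  exacts [card_doubledLetters a b, card_doubledLetters_compl a b, card_empty]

lemma card_twoOneContent_sub_fiber (a b : ℕ) (E : Finset (Fin (a + b))) {c : ℕ} (hc : c ≠ 0) :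
    #{j | twoOneContent a b j - (if j ∈ E then 1 else 0) = c} =
      if c = 2 then a - #(E ∩ doubledLetters a b)
      else if c = 1 then #(E ∩ doubledLetters a b) + (b - #(E \ doubledLetters a b)) else 0 := by
  set A := doubledLetters a b
  have hfib : ({j | twoOneContent a b j - (if j ∈ E then 1 else 0) = c} : Finset _) =
      if c = 2 then A \ E else if c = 1 then (A ∩ E) ∪ (Aᶜ \ E) else ∅ := by
    ext j
    simp only [mem_filter, mem_univ, true_and]
    by_cases hja : (j : ℕ) < a <;> by_cases hjE : j ∈ E <;> split_ifs <;>
      simp [twoOneContent, A, mem_doubledLetters, hja, hjE] <;> omega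
  rw [hfib]
  split_ifs
  · rw [card_sdiff, card_doubledLetters]
  · rw [card_union_of_disjoint (disjoint_of_subset_left inter_subset_left
      (disjoint_of_subset_right sdiff_subset disjoint_compl_right)), inter_comm, card_sdiff,
      card_doubledLetters_compl, ← sdiff_eq_inter_compl]
  · rfl

lemma avoidCount_twoOneContent_sub (a b : ℕ) (E : Finset (Fin (a + b))) :
    avoidCount r (fun j => twoOneContent a b j - if j ∈ E then 1 else 0) =
      B r (a - #(E ∩ doubledLetters a b))
        (b - #(E \ doubledLetters a b) + #(E ∩ doubledLetters a b)) := by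
  rw [B_eq_avoidCount]
  refine avoidCount_eq_of_card_fiber_eq fun c hc => ?_
  rw [card_twoOneContent_sub_fiber a b E hc, card_twoOneContent_fiber]
  split_ifs <;> omega

lemma card_incPrefixAvoids_twoOneContent (a b k : ℕ) :
    #{w ∈ words (twoOneContent a b) | IncPrefixAvoids r k w} =
      ∑ i ∈ range (k + 1), a.choose i * b.choose (k - i) * B r (a - i) (b - (k - i) + i) := by
  have hsupp : ({j | 0 < twoOneContent a b j} : Finset (Fin (a + b))) = univ :=
    filter_true_of_mem fun j _ => by unfold twoOneContent; split_ifs <;> omega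
  rw [card_incPrefixAvoids, hsupp]
  calc _ = ∑ E ∈ powersetCard k univ, (fun i => B r (a - i) (b - (k - i) + i))
        #(E ∩ doubledLetters a b) := sum_congr rfl fun E hE => by
        have := card_inter_add_card_sdiff E (doubledLetters a b)
        rw [(mem_powersetCard.1 hE).2] at this
        rw [avoidCount_twoOneContent_sub,
          show #(E \ doubledLetters a b) = k - #(E ∩ doubledLetters a b) by omega]
    _ = _ := by
        rw [sum_powersetCard_eq_sum_choose (doubledLetters a b) k fun i =>
          B r (a - i) (b - (k - i) + i), card_doubledLetters, card_doubledLetters_compl]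
        simp only [smul_eq_mul]

end TwoOne

lemma B_zero_zero {r : ℕ} (hr : 0 < r) : B r 0 0 = 1 := by
  rw [B_eq_avoidCount, avoidCount, card_eq_one]
  refine ⟨[], ext fun w => ?_⟩
  rw [mem_filter, mem_words, mem_singleton]
  constructor
  · rintro -
    match w with
    | [] => rfl
    | a :: _ => exact a.elim0
  · rintro rfl
    exact ⟨fun a => a.elim0, avoidsInc_iff_forall_not_incRunAt.2 fun i h => by
      simp [IncRunAt] at h; omega⟩

lemma length_mem_words_twoOneContent {r a b : ℕ} (hr : 2 ≤ r) {w : List (Fin (a + b))}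
    (hw : w ∈ words (twoOneContent a b)) : a + b ≤ w.length ∧ w.length ≤ (a + b) * r := by
  have hbound : ∀ j, 1 ≤ twoOneContent a b j ∧ twoOneContent a b j ≤ r := fun j => by
    unfold twoOneContent; split_ifs <;> omega
  rw [length_of_mem_words hw]
  constructor
  · simpa using card_nsmul_le_sum univ _ 1 fun j _ => (hbound j).1
  · simpa using sum_le_card_nsmul univ _ r fun j _ => (hbound j).2

lemma sum_indicator_incPrefixAvoids_twoOneContent {r : ℕ} (a b k : ℕ) :
    ∑ w ∈ words (twoOneContent a b), (if IncPrefixAvoids r k w then 1 else 0 : ℤ) =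
      ∑ i ∈ range (k + 1),
        (a.choose i : ℤ) * b.choose (k - i) * B r (a - i) (b - (k - i) + i) := by
  rw [← natCast_card_filter, card_incPrefixAvoids_twoOneContent]
  push_cast
  rfl

/-- Terms whose arguments would be negative are killed by vanishing binomial coefficients. -/
theorem B_recurrence (r : ℕ) (hr : 2 ≤ r) :
    B r 0 0 = 1 ∧
    ∀ a b : ℕ, 1 ≤ a + b →
      (B r a b : ℤ) =
        a * B r (a - 1) (b + 1) + b * B r a (b - 1) +
        ∑ j ∈ Finset.Icc 1 (a + b),
          (-(∑ i ∈ Finset.range (j * r + 1),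
              (a.choose i : ℤ) * (b.choose (j * r - i)) *
                B r (a - i) (b - (j * r - i) + i)) +
            ∑ i ∈ Finset.range (j * r + 2),
              (a.choose i : ℤ) * (b.choose (j * r + 1 - i)) *
                B r (a - i) (b - (j * r + 1 - i) + i)) := by
  refine ⟨B_zero_zero (by omega), fun a b hab => ?_⟩
  have hlen w (hw : w ∈ words (twoOneContent a b)) := length_mem_words_twoOneContent hr hw
  rw [B_eq_avoidCount, avoidCount, natCast_card_filter,
    sum_congr rfl fun w hw => avoidsInc_indicator_eq (by omega) (a + b)
      (hab.trans (hlen w hw).1) (hlen w hw).2,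
    sum_add_distrib, sum_comm]
  simp only [sum_add_distrib, sum_neg_distrib, sum_indicator_incPrefixAvoids_twoOneContent]
  congr 1
  simp [sum_range_succ]
  ring
end

section
/- Let C be the set of clusters for the forbidden set B = {strictly increasing words of length r in alphabet {1,...,n}}, where a cluster is a word with a set of marked factors from B such that consecutive marks overlap and every letter lies in some mark, weighted by (-1)^{number of marks} times the product of variables of its letters. Then the total weight of all clusters equals Σ_{m≥1} (-e_{mr} + e_{mr+1}), where e_k is the k-th elementary symmetric polynomial in x_1,...,x_n. -/
/-!
Adjacent marks of a cluster overlap, so any two neighbouring letters lie in a common marked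
window and the whole word is strictly increasing. A cluster of length `d + r` is therefore a
set `S` of `d + r` letters together with its marks, which read backwards descend from `d` to `0`
in steps of size between `1` and `r - 1`. The signed count `c d` of these descending chains obeys
`c d = -∑_{d - r < j < d} c j` for `d > 0`, whose solution is `1` on multiples of `r`, `-1` just
above them and `0` elsewhere (the coefficients of `(1 - t) / (1 - t ^ r)`). Summing over `S` turns
the cluster sum into `∑_d -c(d) e_{d+r}`, and grouping `d` into blocks of length `r` gives the
claim.
-/

/-- A cluster for the forbidden set of strictly increasing length-`r` words over
the alphabet `Fin n`: a word together with a nonempty sorted list of marks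
(start positions of occurrences of strictly increasing length-`r` factors) such
that consecutive marks overlap and every position is covered by some mark. -/
structure Cluster (n r : ℕ) where
  word : List (Fin n)
  marks : List ℕ
  marks_ne : marks ≠ []
  sorted : marks.Chain' (· < ·)
  occ : ∀ s ∈ marks, s + r ≤ word.length ∧ ((word.drop s).take r).Chain' (· < ·)
  overlap : marks.Chain' (fun s t => t < s + r)
  cover : ∀ i < word.length, ∃ s ∈ marks, s ≤ i ∧ i < s + r

/-- The weight of a cluster: `(-1)^{number of marks}` times the product of the
variables of its letters. -/
noncomputable def clusterWeight {n r : ℕ} (c : Cluster n r) : MvPolynomial (Fin n) ℤ :=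
  MvPolynomial.C ((-1 : ℤ) ^ c.marks.length) *
    (c.word.map fun a => (MvPolynomial.X a : MvPolynomial (Fin n) ℤ)).prod

open Finset

def residueSign (r n : ℕ) : ℤ := if n % r = 0 then 1 else if n % r = 1 then -1 else 0

section residueSign

variable {r : ℕ}

theorem residueSign_mul_add (k j : ℕ) : residueSign r (k * r + j) = residueSign r j := by
  rw [residueSign, residueSign, Nat.mul_add_mod']

theorem residueSign_succ (hr : 2 ≤ r) (n : ℕ) :
    residueSign r (n + 1) = (if (n + 1) % r = 0 then 1 else 0) - if n % r = 0 then 1 else 0 := by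
  have hlt := Nat.mod_lt n (by omega : 0 < r)
  have hmod : (n + 1) % r = if n % r + 1 = r then 0 else n % r + 1 := by
    rw [Nat.add_mod_eq_ite, Nat.mod_eq_of_lt (by omega : 1 < r)]
    split_ifs <;> omega
  rw [residueSign, hmod]
  clear hmod
  generalize n % r = q at *
  split_ifs <;> first | contradiction | omega

theorem sum_range_succ_residueSign (hr : 2 ≤ r) (n : ℕ) :
    ∑ j ∈ range (n + 1), residueSign r j = if n % r = 0 then 1 else 0 := by
  induction n with
  | zero => simp [residueSign]
  | succ n ih => rw [sum_range_succ, ih, residueSign_succ hr]; ring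

theorem residueSign_succ_eq_neg_sum (hr : 2 ≤ r) (e : ℕ) :
    residueSign r (e + 1) = -∑ j ∈ (range (e + 1)).filter (e + 1 < · + r), residueSign r j := by
  rw [residueSign_succ hr]
  rcases Nat.lt_or_ge (e + 1) r with he | he
  · rw [filter_true_of_mem (by simp only [mem_range]; omega), sum_range_succ_residueSign hr,
      Nat.mod_eq_of_lt he, if_neg (Nat.succ_ne_zero e)]
    ring
  · obtain ⟨a, ha⟩ := Nat.exists_eq_add_of_le' he
    have hwindow : (range (e + 1)).filter (e + 1 < · + r) = Ico (a + 1) (e + 1) := by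
      ext j
      simp only [mem_filter, mem_range, mem_Ico]
      omega
    rw [hwindow, sum_Ico_eq_sub _ (by omega), sum_range_succ_residueSign hr,
      sum_range_succ_residueSign hr, ha, Nat.add_mod_right]
    ring

theorem sum_range_residueSign_smul {M : Type*} [AddCommGroup M] (hr : 2 ≤ r) (E : ℕ → M)
    (a : ℕ) : ∑ j ∈ range r, residueSign r j • E (a + j) = E a - E (a + 1) := by
  obtain ⟨r, rfl⟩ := Nat.exists_eq_add_of_le' hr
  have hzero : ∀ j ∈ range r, residueSign (r + 2) (j + 2) = 0 := fun j hj => by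
    have : (j + 2) % (r + 2) = j + 2 := Nat.mod_eq_of_lt (by rw [mem_range] at hj; omega)
    simp [residueSign, this]
  rw [sum_range_succ', sum_range_succ', sum_eq_zero fun j hj => by rw [hzero j hj, zero_smul]]
  simp [residueSign, Nat.mod_eq_of_lt (by omega : 1 < r + 2)]
  abel

theorem sum_range_mul_neg_residueSign_smul {M : Type*} [AddCommGroup M] (hr : 2 ≤ r)
    (E : ℕ → M) (K : ℕ) :
    ∑ d ∈ range (K * r), (-residueSign r d) • E (d + r) =
      ∑ m ∈ Icc 1 K, (-E (m * r) + E (m * r + 1)) := by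
  induction K with
  | zero => simp
  | succ K ih =>
    rw [Nat.succ_mul, sum_range_add, ih, sum_Icc_succ_top (by omega), Nat.succ_mul]
    simp only [residueSign_mul_add, neg_smul, sum_neg_distrib, add_right_comm _ _ r,
      sum_range_residueSign_smul hr]
    abel

end residueSign

/-- The lists `l` for which `e :: l` descends from `e` to `0` in steps between `1` and `r - 1`:
the marks of a cluster of length `e + r`, read backwards. -/
def markChains (r : ℕ) : ℕ → Finset (List ℕ)
  | 0 => {[]}
  | e + 1 => ((range (e + 1)).filter (e + 1 < · + r)).attach.biUnion
      fun j => (markChains r j).image (j.1 :: ·)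
decreasing_by exact List.mem_range.mp (mem_filter.mp j.2).1

theorem mem_markChains {r e : ℕ} {l : List ℕ} :
    l ∈ markChains r e ↔ (e :: l).IsChain (fun s t => t < s ∧ s < t + r) ∧ 0 ∈ e :: l := by
  induction e using Nat.strong_induction_on generalizing l with
  | _ e ih =>
    cases e with
    | zero => cases l <;> simp [markChains]
    | succ e =>
      cases l with
      | nil => simp [markChains]
      | cons j l =>
        rw [markChains]
        simp only [mem_biUnion, mem_attach, mem_image, true_and, Subtype.exists, mem_filter,
          mem_range, List.cons.injEq]
        constructor
        · rintro ⟨_, hj, _, hl, rfl, rfl⟩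
          rw [ih _ hj.1] at hl
          exact ⟨List.IsChain.cons_cons hj hl.1, List.mem_cons_of_mem _ hl.2⟩
        · rintro ⟨hc, h0⟩
          rw [List.isChain_cons_cons] at hc
          refine ⟨j, hc.1, l, (ih j hc.1.1).2 ⟨hc.2, ?_⟩, rfl, rfl⟩
          simpa using h0

theorem sum_markChains {r : ℕ} (hr : 2 ≤ r) (e : ℕ) :
    ∑ l ∈ markChains r e, (-1 : ℤ) ^ l.length = residueSign r e := by
  induction e using Nat.strong_induction_on with
  | _ e ih =>
    cases e with
    | zero => simp [markChains, residueSign]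
    | succ e =>
      rw [markChains, sum_biUnion, residueSign_succ_eq_neg_sum hr, ← sum_attach _ (residueSign r),
        ← sum_neg_distrib]
      · refine sum_congr rfl fun j _ => ?_
        have hj : j.1 < e + 1 := List.mem_range.mp (mem_filter.mp j.2).1
        simp only [sum_image fun _ _ _ _ h => List.cons_injective h, List.length_cons, pow_succ,
          mul_neg_one, sum_neg_distrib, ih j hj]
      · intro j _ k _ hjk
        simp only [Function.onFun, disjoint_left, mem_image]
        rintro _ ⟨l, _, rfl⟩ ⟨l', _, h⟩
        exact hjk (Subtype.ext (List.cons_eq_cons.mp h).1.symm)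

theorem exists_le_lt_add_of_isChain {k i : ℕ} : ∀ {a : ℕ} {l : List ℕ},
    (a :: l).IsChain (fun s t => s ≤ t + k) → (∃ x ∈ a :: l, x ≤ i) → i < a + k →
    ∃ s ∈ a :: l, s ≤ i ∧ i < s + k
  | a, [], _, ⟨x, hx, hxi⟩, hi =>
    ⟨a, List.mem_singleton_self a, by rw [List.mem_singleton] at hx; omega, hi⟩
  | a, b :: l, hc, ⟨x, hx, hxi⟩, hi => by
    rw [List.isChain_cons_cons] at hc
    by_cases ha : a ≤ i
    · exact ⟨a, List.mem_cons_self, ha, hi⟩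
    · obtain ⟨s, hs, h⟩ := exists_le_lt_add_of_isChain hc.2
        ⟨x, (List.mem_cons.mp hx).resolve_left (by omega), hxi⟩ (by omega)
      exact ⟨s, List.mem_cons_of_mem _ hs, h⟩

theorem List.rel_getElem_succ_of_isChain_take_drop {α : Type*} {R : α → α → Prop} {w : List α}
    {s k i : ℕ} (hc : ((w.drop s).take k).IsChain R) (hsi : s ≤ i) (hik : i + 1 < s + k)
    (hi : i + 1 < w.length) : R w[i] w[i + 1] := by
  have := List.isChain_iff_getElem.mp hc (i - s) (by simp only [length_take, length_drop]; omega)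
  simpa only [getElem_take, getElem_drop, show s + (i - s) = i by omega,
    show s + (i - s + 1) = i + 1 by omega] using this

def clusterParams (n r N : ℕ) : Finset (Σ _ : ℕ, Finset (Fin n) × List ℕ) :=
  (range N).sigma fun d => powersetCard (d + r) univ ×ˢ markChains r d

theorem mem_clusterParams {n r N : ℕ} {p : Σ _ : ℕ, Finset (Fin n) × List ℕ} :
    p ∈ clusterParams n r N ↔ p.1 < N ∧ p.2.1.card = p.1 + r ∧ p.2.2 ∈ markChains r p.1 := by
  simp [clusterParams]

namespace Cluster

variable {n r N : ℕ}

theorem ext {c c' : Cluster n r} (hw : c.word = c'.word) (hm : c.marks = c'.marks) : c = c' := by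
  cases c; cases c'
  subst hw hm
  rfl

theorem le_length (c : Cluster n r) : r ≤ c.word.length := by
  obtain ⟨s, hs⟩ := List.exists_mem_of_ne_nil _ c.marks_ne
  have := (c.occ s hs).1
  omega

theorem exists_reverse_marks_eq (hr : 0 < r) (c : Cluster n r) :
    ∃ l ∈ markChains r (c.word.length - r), c.marks.reverse = (c.word.length - r) :: l := by
  have hchain : c.marks.reverse.IsChain (fun s t => t < s ∧ s < t + r) :=
    List.isChain_reverse.mpr <| List.isChain_iff_getElem.mpr fun i hi =>
      ⟨List.isChain_iff_getElem.mp c.sorted i hi, List.isChain_iff_getElem.mp c.overlap i hi⟩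
  obtain ⟨a, l, hal⟩ := List.exists_cons_of_ne_nil (List.reverse_ne_nil_iff.mpr c.marks_ne)
  have hmem : ∀ s, s ∈ a :: l ↔ s ∈ c.marks := fun s => by rw [← hal, List.mem_reverse]
  rw [hal] at hchain
  have hlen := c.le_length
  obtain ⟨z, hz, hz0, -⟩ := c.cover 0 (by omega)
  obtain ⟨s, hs, -, hsL⟩ := c.cover (c.word.length - 1) (by omega)
  have hsa : s ≤ a := by
    rcases List.mem_cons.mp ((hmem s).mpr hs) with rfl | hs
    · rfl
    · exact (List.IsChain.rel_cons (R := (· > ·)) (hchain.imp fun _ _ h => h.1) hs).le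
  have ha : a = c.word.length - r := by
    have := (c.occ a ((hmem a).mp List.mem_cons_self)).1
    omega
  subst ha
  refine ⟨l, mem_markChains.mpr ⟨hchain, ?_⟩, hal⟩
  rw [hmem]
  simpa [show z = 0 by omega] using hz

theorem isChain_word (hr : 0 < r) (c : Cluster n r) : c.word.IsChain (· < ·) := by
  obtain ⟨l, hl, hrev⟩ := c.exists_reverse_marks_eq hr
  obtain ⟨hchain, h0⟩ := mem_markChains.mp hl
  refine List.isChain_iff_getElem.mpr fun i hi => ?_
  -- a window of length `r - 1` around each mark still covers the word, so `i` and `i + 1`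
  -- lie in one marked factor
  obtain ⟨s, hs, hsi, his⟩ := exists_le_lt_add_of_isChain (k := r - 1) (i := i)
    (hchain.imp fun _ _ h => by omega) ⟨0, h0, i.zero_le⟩ (by omega)
  rw [← hrev, List.mem_reverse] at hs
  exact List.rel_getElem_succ_of_isChain_take_drop (c.occ s hs).2 hsi (by omega) hi

def ofMarkChain {d : ℕ} (S : Finset (Fin n)) (hS : S.card = d + r) {l : List ℕ}
    (hl : l ∈ markChains r d) : Cluster n r where
  word := S.sort (· ≤ ·)
  marks := (d :: l).reverse
  marks_ne := by simp
  sorted := List.isChain_reverse.mpr ((mem_markChains.mp hl).1.imp fun _ _ h => h.1)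
  overlap := List.isChain_reverse.mpr ((mem_markChains.mp hl).1.imp fun _ _ h => h.2)
  occ s hs := by
    have hsd : s ≤ d := by
      rcases List.mem_cons.mp (List.mem_reverse.mp hs) with rfl | hs
      · rfl
      · exact (List.IsChain.rel_cons (R := (· > ·))
          ((mem_markChains.mp hl).1.imp fun _ _ h => h.1) hs).le
    refine ⟨by simp [hS, hsd], ?_⟩
    exact S.sortedLT_sort.isChain.sublist ((List.take_sublist _ _).trans (List.drop_sublist _ _))
  cover i hi := by
    rw [Finset.length_sort, hS] at hi
    obtain ⟨hchain, h0⟩ := mem_markChains.mp hl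
    obtain ⟨s, hs, h⟩ := exists_le_lt_add_of_isChain (hchain.imp fun _ _ h => h.2.le)
      ⟨0, h0, i.zero_le⟩ hi
    exact ⟨s, List.mem_reverse.mpr hs, h⟩

theorem clusterWeight_ofMarkChain {d : ℕ} (S : Finset (Fin n)) (hS : S.card = d + r)
    {l : List ℕ} (hl : l ∈ markChains r d) :
    clusterWeight (ofMarkChain S hS hl) =
      (-1 : ℤ) ^ (l.length + 1) • ∏ i ∈ S, MvPolynomial.X i := by
  rw [clusterWeight, MvPolynomial.C_mul', ofMarkChain, List.length_reverse, List.length_cons,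
    ← List.prod_toFinset _ (S.sort_nodup _), Finset.sort_toFinset]

def ofParams (p : clusterParams n r N) : Cluster n r :=
  ofMarkChain p.1.2.1 (mem_clusterParams.mp p.2).2.1 (mem_clusterParams.mp p.2).2.2

theorem ofParams_injective : Function.Injective (ofParams (n := n) (r := r) (N := N)) := by
  rintro ⟨⟨d, S, l⟩, hp⟩ ⟨⟨d', S', l'⟩, hp'⟩ h
  have hw : S.sort (· ≤ ·) = S'.sort (· ≤ ·) := congrArg word h
  have hm : (d :: l).reverse = (d' :: l').reverse := congrArg marks h
  have hS : S = S' := by simpa using congrArg List.toFinset hw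
  simp only [List.reverse_inj, List.cons.injEq] at hm
  obtain ⟨rfl, rfl⟩ := hm
  subst hS
  rfl

theorem ofParams_surjective (hr : 0 < r) (hN : n < N + r) :
    Function.Surjective (ofParams (n := n) (r := r) (N := N)) := by
  intro c
  obtain ⟨l, hl, hrev⟩ := c.exists_reverse_marks_eq hr
  have hsorted := List.isChain_iff_pairwise.mp (c.isChain_word hr)
  have hnd : c.word.Nodup := hsorted.imp ne_of_lt
  have hcard : c.word.toFinset.card = c.word.length := List.toFinset_card_of_nodup hnd
  have hlen : c.word.length ≤ n := hcard ▸ (card_le_univ _).trans_eq (Fintype.card_fin n)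
  have hp : ⟨c.word.length - r, c.word.toFinset, l⟩ ∈ clusterParams n r N :=
    have := c.le_length
    mem_clusterParams.mpr ⟨(by omega : c.word.length - r < N),
      (by omega : c.word.toFinset.card = c.word.length - r + r), hl⟩
  refine ⟨⟨_, hp⟩, ext ((List.toFinset_sort _ hnd).mpr (hsorted.imp le_of_lt)) ?_⟩
  simp [ofParams, ofMarkChain, ← hrev]

end Cluster

theorem finsum_clusterWeight {n r : ℕ} (N : ℕ) (hr : 2 ≤ r) (hN : n < N + r) :
    ∑ᶠ c : Cluster n r, clusterWeight c =
      ∑ d ∈ range N, (-residueSign r d) • MvPolynomial.esymm (Fin n) ℤ (d + r) := by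
  calc ∑ᶠ c : Cluster n r, clusterWeight c
      = ∑ᶠ p : clusterParams n r N,
          (-1 : ℤ) ^ (p.1.2.2.length + 1) • ∏ i ∈ p.1.2.1, MvPolynomial.X i :=
        (finsum_eq_of_bijective _
          ⟨Cluster.ofParams_injective, Cluster.ofParams_surjective (by omega) hN⟩
          fun _ => (Cluster.clusterWeight_ofMarkChain _ _ _).symm).symm
    _ = ∑ d ∈ range N, ∑ S ∈ powersetCard (d + r) univ, ∑ l ∈ markChains r d,
          (-1 : ℤ) ^ (l.length + 1) • ∏ i ∈ S, MvPolynomial.X i := by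
        rw [finsum_eq_sum_of_fintype]
        refine (sum_coe_sort (clusterParams n r N)
          fun p => (-1 : ℤ) ^ (p.2.2.length + 1) • ∏ i ∈ p.2.1, MvPolynomial.X i).trans ?_
        rw [clusterParams, sum_sigma]
        simp only [sum_product]
    _ = _ := by
        refine sum_congr rfl fun d _ => ?_
        simp only [← sum_smul, pow_succ, mul_neg_one, sum_neg_distrib, sum_markChains hr,
          MvPolynomial.esymm, smul_sum]

/-- The total weight of all clusters equals `∑_{m≥1} (-e_{mr} + e_{mr+1})`. -/
theorem cluster_weight_sum (n r : ℕ) (hr : 2 ≤ r) :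
    ∑ᶠ c : Cluster n r, clusterWeight c =
      ∑ m ∈ Finset.Icc 1 n,
        (-(MvPolynomial.esymm (Fin n) ℤ (m * r)) +
          MvPolynomial.esymm (Fin n) ℤ (m * r + 1)) := by
  rw [finsum_clusterWeight (n * r) hr (by nlinarith), sum_range_mul_neg_residueSign_smul hr]
end

section
/- (Theorem 2) For r ≥ 2, let g_r(m; t) = Σ_{w} t^{α(w)}, summing over all words w over {1,...,n} with multiplicity vector m, where α(w) is the number of occurrences of the consecutive pattern 12...r in w. Then Σ_m g_r(m;t) x_1^{m_1}···x_n^{m_n} = 1/(1 - e_1 - Σ_{k=r}^{n} P_k^{(r)}(t)·e_k), where e_k is the k-th elementary symmetric polynomial in x_1,...,x_n and P_k^{(r)}(t) satisfies P_k^{(r)}=0 for k<r, P_r^{(r)}=t-1, P_k^{(r)}=(t-1)Σ_{i=1}^{r-1}P_{k-i}^{(r)} for k>r. -/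
open Polynomial

/-- The number of occurrences of the consecutive pattern `1 2 ... r` in the word
`w`, i.e. the number of indices `i` with `w_i < w_{i+1} < ⋯ < w_{i+r-1}`. -/
def occCount {α : Type*} [LT α] [DecidableRel ((· < ·) : α → α → Prop)]
    (r : ℕ) (w : List α) : ℕ :=
  ((Finset.range (w.length + 1 - r)).filter
    (fun i => ((w.drop i).take r).IsChain (· < ·))).card

/-- `g_r(m; t) = ∑_w t^{α(w)}` over words with multiplicity vector `m`. -/
noncomputable def patternEnumerator (r n : ℕ) (m : Fin n → ℕ) : Polynomial ℤ :=
  ∑ᶠ w : {w : List (Fin n) // ∀ j, w.count j = m j},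
    (X : Polynomial ℤ) ^ occCount r (w : List (Fin n))

noncomputable def patternGF (r n : ℕ) : MvPowerSeries (Fin n) (Polynomial ℤ) :=
  fun d => patternEnumerator r n ⇑d

/-!
Expanding `1 / (1 - ∑_k a_k e_k)`, the coefficient of `x^d` sums over the words with
multiplicities `d` cut into consecutive strictly increasing blocks, a block of length `k` weighted
by `a_k`: an increasing block of length `k` is the same thing as a `k`-subset of the alphabet, a
monomial of `e_k`. Peeling off the first block, `G * (1 - ∑_k a_k e_k) = 1` holds for the
generating function `G` of any weight `f` on words with
`f w = [w = []] + ∑_k [k ≤ L(w)] a_k f (drop k w)`, where `L(w)` is the length of the maximal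
increasing prefix of `w`. Take `a_1 = 1`, `a_k = P_k` and `f w = t ^ α(w)`. Occurrences of `12⋯r`
lie inside increasing runs, and a run of length `L` contains `(L + 1 - r)₊` of them, so the
recursion reduces to `∑_{k ≤ L} P_k t^{(L-k+1-r)₊} = t^{(L+1-r)₊} - t^{(L-r)₊}`. This follows
from the recurrence for `P` by strong induction on `L`: the sum over `i < r` it produces
telescopes.
-/

open Finset

namespace List

variable {α : Type*} [LinearOrder α]

/-- The length of the longest strictly increasing prefix. -/
def firstRunLength : List α → ℕ
  | [] => 0
  | [_] => 1
  | a :: b :: w => if a < b then firstRunLength (b :: w) + 1 else 1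

theorem le_firstRunLength_iff :
    ∀ {k : ℕ} {w : List α}, k ≤ w.firstRunLength ↔ k ≤ w.length ∧ (w.take k).IsChain (· < ·)
  | 0, w => by simp
  | k + 1, [] => by simp [firstRunLength]
  | k + 1, [a] => by simp [firstRunLength]
  | 1, a :: b :: w => by simp [firstRunLength]; split_ifs <;> omega
  | k + 2, a :: b :: w => by
    have ih := le_firstRunLength_iff (k := k + 1) (w := b :: w)
    by_cases hab : a < b
    · simp_all [firstRunLength]
    · simp [firstRunLength, hab]

theorem firstRunLength_le_length (w : List α) : w.firstRunLength ≤ w.length :=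
  (le_firstRunLength_iff.mp le_rfl).1

theorem one_le_firstRunLength {w : List α} (hw : w ≠ []) : 1 ≤ w.firstRunLength := by
  obtain ⟨a, v, rfl⟩ := exists_cons_of_ne_nil hw
  exact le_firstRunLength_iff.mpr ⟨by simp, by simp⟩

theorem firstRunLength_le_card [Fintype α] (w : List α) : w.firstRunLength ≤ Fintype.card α := by
  obtain ⟨hlen, hchain⟩ := le_firstRunLength_iff.mp (le_refl w.firstRunLength)
  have hnodup : (w.take w.firstRunLength).Nodup :=
    (isChain_iff_pairwise.mp hchain).imp ne_of_lt
  simpa [hlen] using hnodup.length_le_card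

theorem firstRunLength_drop :
    ∀ {k : ℕ} {w : List α}, k < w.firstRunLength →
      (w.drop k).firstRunLength = w.firstRunLength - k
  | 0, w, _ => rfl
  | k + 1, [], h => by simp [firstRunLength] at h
  | k + 1, [a], h => by simp [firstRunLength] at h
  | k + 1, a :: b :: w, h => by
    by_cases hab : a < b
    · simp only [firstRunLength, if_pos hab] at h ⊢
      rw [drop_succ_cons, firstRunLength_drop (by omega)]
      omega
    · simp [firstRunLength, hab] at h

theorem sort_toFinset_take {k : ℕ} {w : List α} (hk : k ≤ w.firstRunLength) :
    (w.take k).toFinset.sort = w.take k ∧ (w.take k).toFinset.card = k := by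
  obtain ⟨hlen, hchain⟩ := le_firstRunLength_iff.mp hk
  have hlt : (w.take k).Pairwise (· < ·) := isChain_iff_pairwise.mp hchain
  have hnodup : (w.take k).Nodup := hlt.imp ne_of_lt
  refine ⟨(toFinset_sort _ hnodup).mpr (hlt.imp le_of_lt), ?_⟩
  rw [toFinset_card_of_nodup hnodup, length_take_of_le hlen]

theorem card_le_firstRunLength_sort_append (T : Finset α) (w : List α) :
    T.card ≤ (T.sort ++ w).firstRunLength := by
  have hlen : T.sort.length = T.card := Finset.length_sort _
  refine le_firstRunLength_iff.mpr ⟨by simp [hlen], ?_⟩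
  rw [take_left' hlen]
  exact isChain_iff_pairwise.mpr (Finset.sortedLT_sort T).pairwise

end List

section Occurrences

variable {α : Type*} [LinearOrder α] {r : ℕ}

theorem occCount_cons (a : α) (w : List α) :
    occCount r (a :: w) = occCount r w + if r ≤ (a :: w).firstRunLength then 1 else 0 := by
  simp only [occCount, card_filter, List.length_cons]
  rcases Nat.lt_or_ge (w.length + 1) r with h | h
  · have : ¬ r ≤ (a :: w).firstRunLength := fun h' => by
      have := (a :: w).firstRunLength_le_length; simp at this; omega
    rw [if_neg this, show w.length + 1 + 1 - r = 0 by omega, show w.length + 1 - r = 0 by omega]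
    simp
  · rw [show w.length + 1 + 1 - r = w.length + 1 - r + 1 by omega, sum_range_succ']
    simp [List.le_firstRunLength_iff, h]

theorem occCount_eq_add_occCount_drop (hr : 1 ≤ r) : ∀ w : List α,
    occCount r w = (w.firstRunLength + 1 - r) + occCount r (w.drop w.firstRunLength)
  | [] => by simp [occCount, List.firstRunLength]; omega
  | [a] => by
    rw [occCount_cons]
    by_cases h : r ≤ 1 <;> simp [List.firstRunLength, occCount, h] <;> omega
  | a :: b :: w => by
    rw [occCount_cons]
    by_cases hab : a < b
    · have hL : (a :: b :: w).firstRunLength = (b :: w).firstRunLength + 1 := by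
        simp [List.firstRunLength, hab]
      rw [hL, occCount_eq_add_occCount_drop hr (b :: w), List.drop_succ_cons]
      split_ifs <;> omega
    · have hL : (a :: b :: w).firstRunLength = 1 := by simp [List.firstRunLength, hab]
      rw [hL]
      split_ifs <;> simp <;> omega

theorem occCount_drop_of_le_firstRunLength (hr : 1 ≤ r) {w : List α} {k : ℕ}
    (hk : k ≤ w.firstRunLength) :
    occCount r (w.drop k)
      = (w.firstRunLength - k + 1 - r) + occCount r (w.drop w.firstRunLength) := by
  rcases hk.lt_or_eq with hk | rfl
  · rw [occCount_eq_add_occCount_drop hr, List.firstRunLength_drop hk, List.drop_drop,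
      Nat.add_sub_cancel' hk.le]
  · simp; omega

end Occurrences

theorem Multiset.mem_lists_toFinset {α : Type*} [DecidableEq α] {D : Multiset α} {w : List α} :
    w ∈ D.lists.toFinset ↔ (w : Multiset α) = D := by
  rw [mem_toFinset, mem_lists_iff, eq_comm]; rfl

theorem Finsupp.toMultiset_tsub_s13 {ι : Type*} [DecidableEq ι] (d e : ι →₀ ℕ) :
    toMultiset (d - e) = toMultiset d - toMultiset e := by
  ext a; simp [Multiset.count_sub]

theorem Finsupp.toMultiset_le_toMultiset_s13 {ι : Type*} [DecidableEq ι] {d e : ι →₀ ℕ} :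
    toMultiset d ≤ toMultiset e ↔ d ≤ e := by
  rw [← coe_orderIsoMultiset]; exact orderIsoMultiset.le_iff_le

theorem Finsupp.toMultiset_eq_zero_s13 {ι : Type*} [DecidableEq ι] {d : ι →₀ ℕ} :
    toMultiset d = 0 ↔ d = 0 := by
  simp [Multiset.ext, Finsupp.ext_iff]

theorem sum_lists_drop_of_le_firstRunLength {σ M : Type*} [Fintype σ] [LinearOrder σ]
    [AddCommMonoid M] (D : Multiset σ) (k : ℕ) (g : List σ → M) :
    ∑ w ∈ D.lists.toFinset with k ≤ w.firstRunLength, g (w.drop k)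
      = ∑ T ∈ powersetCard k univ with T.val ≤ D, ∑ w ∈ (D - T.val).lists.toFinset, g w := by
  rw [sum_sigma']
  refine sum_nbij' (fun w => ⟨(w.take k).toFinset, w.drop k⟩) (fun p => p.1.sort ++ p.2)
    ?_ ?_ ?_ ?_ (fun _ _ => rfl)
  · intro w hw
    simp only [mem_filter, Multiset.mem_lists_toFinset] at hw
    obtain ⟨hsort, hcard⟩ := List.sort_toFinset_take hw.2
    have hD : D = (w.take k).toFinset.val + ↑(w.drop k) := by
      rw [← sort_eq (r := (· ≤ ·)), hsort, Multiset.coe_add, List.take_append_drop, hw.1]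
    simp only [mem_sigma, mem_filter, mem_powersetCard_univ, Multiset.mem_lists_toFinset]
    exact ⟨⟨hcard, hD ▸ Multiset.le_add_right _ _⟩, by rw [hD, add_tsub_cancel_left]⟩
  · rintro ⟨T, w⟩ hp
    simp only [mem_sigma, mem_filter, mem_powersetCard_univ, Multiset.mem_lists_toFinset] at hp
    simp only [mem_filter, Multiset.mem_lists_toFinset]
    refine ⟨?_, hp.1.1 ▸ List.card_le_firstRunLength_sort_append T w⟩
    rw [← Multiset.coe_add, sort_eq (r := (· ≤ ·)), hp.2, add_tsub_cancel_of_le hp.1.2]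
  · intro w hw
    simp only [mem_filter] at hw
    simp only [(List.sort_toFinset_take hw.2).1, List.take_append_drop]
  · rintro ⟨T, w⟩ hp
    simp only [mem_sigma, mem_filter, mem_powersetCard_univ] at hp
    have hlen : T.sort.length = k := (length_sort _).trans hp.1.1
    simp only [List.take_left' hlen, List.drop_left' hlen, sort_toFinset]

section WordSeries

variable {σ R : Type*} [LinearOrder σ] [CommRing R]

/-- The coefficient of `x^d` is the sum of `f` over the words with multiplicity vector `d`. -/
noncomputable def wordSeries (f : List σ → R) : MvPowerSeries σ R :=
  fun d => ∑ w ∈ (Finsupp.toMultiset d).lists.toFinset, f w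

theorem coeff_wordSeries (f : List σ → R) (d : σ →₀ ℕ) :
    MvPowerSeries.coeff d (wordSeries f) = ∑ w ∈ (Finsupp.toMultiset d).lists.toFinset, f w :=
  rfl

variable [Fintype σ]

theorem sum_lists_eq_ite_add_sum (K : Finset ℕ) (a : ℕ → R) (f : List σ → R)
    (hf : ∀ w, f w = (if w = [] then 1 else 0)
      + ∑ k ∈ K with k ≤ w.firstRunLength, a k * f (w.drop k)) (D : Multiset σ) :
    ∑ w ∈ D.lists.toFinset, f w = (if D = 0 then 1 else 0)
      + ∑ k ∈ K, a k * ∑ T ∈ powersetCard k univ with T.val ≤ D,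
          ∑ w ∈ (D - T.val).lists.toFinset, f w := by
  rw [sum_congr rfl fun w _ => hf w, sum_add_distrib, sum_ite_eq']
  congr 1
  · simp
  · conv_lhs => simp only [sum_filter]
    rw [sum_comm]
    refine sum_congr rfl fun k _ => ?_
    rw [← sum_lists_drop_of_le_firstRunLength, mul_sum, sum_filter]

theorem wordSeries_mul_eq_one (K : Finset ℕ) (a : ℕ → R) (f : List σ → R)
    (hf : ∀ w, f w = (if w = [] then 1 else 0)
      + ∑ k ∈ K with k ≤ w.firstRunLength, a k * f (w.drop k)) :
    wordSeries f * ((1 - ∑ k ∈ K, MvPolynomial.C (a k) * MvPolynomial.esymm σ R k :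
      MvPolynomial σ R) : MvPowerSeries σ R) = 1 := by
  have hpoly : ((1 - ∑ k ∈ K, MvPolynomial.C (a k) * MvPolynomial.esymm σ R k :
      MvPolynomial σ R) : MvPowerSeries σ R) = 1 - ∑ k ∈ K, ∑ T ∈ powersetCard k univ,
        MvPowerSeries.monomial (∑ i ∈ T, Finsupp.single i 1) (a k) := by
    simp only [MvPolynomial.esymm_eq_sum_monomial, mul_sum, MvPolynomial.C_mul_monomial, mul_one]
    rw [← MvPolynomial.coeToMvPowerSeries.ringHom_apply]
    simp only [map_sub, map_one, map_sum, MvPolynomial.coeToMvPowerSeries.ringHom_apply,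
      MvPolynomial.coe_monomial]
  have hT (T : Finset σ) : Finsupp.toMultiset (∑ i ∈ T, Finsupp.single i 1) = T.val := by
    rw [Finsupp.toMultiset_sum_single, one_nsmul]
  ext d
  rw [hpoly, mul_sub, mul_one, map_sub, MvPowerSeries.coeff_one, coeff_wordSeries,
    sum_lists_eq_ite_add_sum K a f hf]
  simp only [Finsupp.toMultiset_eq_zero_s13, mul_sum, map_sum, MvPowerSeries.coeff_mul_monomial,
    coeff_wordSeries, ← Finsupp.toMultiset_le_toMultiset_s13, Finsupp.toMultiset_tsub_s13, hT,
    ← sum_filter, sum_mul, mul_comm (f _) (a _), add_sub_cancel_right]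

end WordSeries

theorem Finset.sum_range_mul_sub_of_le {R : Type*} [CommSemiring R] (f g : ℕ → R) (hf : f 0 = 0)
    {i L : ℕ} (hi : i ≤ L) :
    ∑ k ∈ range (L + 1), f (k - i) * g (L - k)
      = ∑ j ∈ range (L - i + 1), f j * g (L - i - j) := by
  rw [← sum_range_add_sum_Ico _ (by omega : i ≤ L + 1),
    sum_eq_zero fun k hk => by rw [Nat.sub_eq_zero_of_le (mem_range.mp hk).le, hf, zero_mul],
    zero_add, sum_Ico_eq_sum_range, show L + 1 - i = L - i + 1 by omega]
  exact sum_congr rfl fun j _ => by rw [Nat.add_sub_cancel_left, Nat.sub_sub]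

section PatternWeights

variable {R : Type*} [CommRing R] {t : R} {r : ℕ} {P : ℕ → R}

theorem eq_mul_ite_add_sum_of_rec (h0 : ∀ k < r, P k = 0) (hbase : P r = t - 1)
    (hrec : ∀ k, r < k → P k = (t - 1) * ∑ i ∈ Icc 1 (r - 1), P (k - i)) (k : ℕ) :
    P k = (t - 1) * ((if k = r then 1 else 0) + ∑ i ∈ Icc 1 (r - 1), P (k - i)) := by
  have hlow : ∀ m ≤ r, ∑ i ∈ Icc 1 (r - 1), P (m - i) = 0 := fun m hm =>
    sum_eq_zero fun i hi => h0 _ (by simp at hi; omega)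
  rcases lt_trichotomy k r with hk | rfl | hk
  · rw [h0 k hk, if_neg hk.ne, hlow k hk.le]; ring
  · rw [hbase, if_pos rfl, hlow k le_rfl]; ring
  · rw [hrec k hk, if_neg hk.ne', zero_add]

theorem sum_range_mul_pow_eq (hr : 1 ≤ r) (h0 : ∀ k < r, P k = 0)
    (hP : ∀ k, P k = (t - 1) * ((if k = r then 1 else 0) + ∑ i ∈ Icc 1 (r - 1), P (k - i)))
    (L : ℕ) :
    ∑ k ∈ range (L + 1), P k * t ^ (L - k + 1 - r) = t ^ (L + 1 - r) - t ^ (L - r) := by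
  induction L using Nat.strong_induction_on with
  | _ L ih =>
  rcases Nat.lt_or_ge L r with hL | hL
  · rw [sum_eq_zero fun k hk => by rw [h0 k (by simp at hk; omega), zero_mul],
      show L + 1 - r = 0 by omega, show L - r = 0 by omega, sub_self]
  have hshift : ∀ i ∈ Icc 1 (r - 1), ∑ k ∈ range (L + 1), P (k - i) * t ^ (L - k + 1 - r)
      = t ^ (L - i + 1 - r) - t ^ (L - i - r) := fun i hi => by
    simp only [mem_Icc] at hi
    rw [sum_range_mul_sub_of_le P (fun j => t ^ (j + 1 - r)) (h0 0 (by omega)) (by omega)]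
    exact ih (L - i) (by omega)
  have htelescope : ∑ i ∈ Icc 1 (r - 1), (t ^ (L - i + 1 - r) - t ^ (L - i - r))
      = t ^ (L - r) - t ^ (L - r + 1 - r) := by
    rw [← Ico_add_one_right_eq_Icc, sum_Ico_eq_sum_range, show r - 1 + 1 - 1 = r - 1 by omega]
    convert sum_range_sub' (fun i => t ^ (L - i - r)) (r - 1) using 2 with i hi
    · simp at hi; congr 1 <;> congr 1 <;> omega
    · rfl
    · congr 1; omega
  calc ∑ k ∈ range (L + 1), P k * t ^ (L - k + 1 - r)
      = (t - 1) * (t ^ (L - r + 1 - r)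
          + ∑ i ∈ Icc 1 (r - 1), ∑ k ∈ range (L + 1), P (k - i) * t ^ (L - k + 1 - r)) := by
        rw [sum_congr rfl fun k _ => by rw [hP k], sum_comm]
        simp only [mul_add, add_mul, sum_add_distrib, mul_assoc, ← mul_sum, sum_mul, ite_mul,
          one_mul, zero_mul, sum_ite_eq', mem_range, if_pos (Nat.lt_succ_of_le hL)]
    _ = (t - 1) * t ^ (L - r) := by rw [sum_congr rfl hshift, htelescope]; ring
    _ = t ^ (L + 1 - r) - t ^ (L - r) := by
        rw [show L + 1 - r = L - r + 1 by omega, pow_succ]; ring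

theorem pow_occCount_eq_add_sum {α : Type*} [LinearOrder α] (hr : 1 ≤ r)
    (h0 : ∀ k < r, P k = 0)
    (hP : ∀ k, P k = (t - 1) * ((if k = r then 1 else 0) + ∑ i ∈ Icc 1 (r - 1), P (k - i)))
    {w : List α} (hw : w ≠ []) :
    t ^ occCount r w = t ^ occCount r (w.drop 1)
      + ∑ k ∈ range (w.firstRunLength + 1), P k * t ^ occCount r (w.drop k) := by
  have hL := List.one_le_firstRunLength hw
  rw [sum_congr rfl fun k hk => by
      rw [occCount_drop_of_le_firstRunLength hr (Nat.lt_succ_iff.mp (mem_range.mp hk)), pow_add,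
        ← mul_assoc],
    ← sum_mul, sum_range_mul_pow_eq hr h0 hP, occCount_drop_of_le_firstRunLength hr hL,
    occCount_eq_add_occCount_drop hr w,
    show w.firstRunLength - 1 + 1 - r = w.firstRunLength - r by omega]
  ring

theorem pow_occCount_eq_ite_add_sum {α : Type*} [LinearOrder α] (hr : 2 ≤ r)
    (h0 : ∀ k < r, P k = 0)
    (hP : ∀ k, P k = (t - 1) * ((if k = r then 1 else 0) + ∑ i ∈ Icc 1 (r - 1), P (k - i)))
    {N : ℕ} (w : List α) (hN : w.firstRunLength ≤ N) :
    t ^ occCount r w = (if w = [] then 1 else 0) + ∑ k ∈ insert 1 (Icc r N)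
      with k ≤ w.firstRunLength, (if k = 1 then 1 else P k) * t ^ occCount r (w.drop k) := by
  rcases eq_or_ne w [] with rfl | hw
  · have hempty : (insert 1 (Icc r N)).filter (· ≤ ([] : List α).firstRunLength) = ∅ :=
      filter_eq_empty_iff.mpr fun k hk => by simp [List.firstRunLength] at hk ⊢; omega
    simp [hempty, occCount, show 1 - r = 0 by omega]
  have hL := List.one_le_firstRunLength hw
  have hfilter : (Icc r N).filter (· ≤ w.firstRunLength) = Icc r w.firstRunLength := by
    ext k; simp; omega
  have hite : ∀ k ∈ Icc r w.firstRunLength,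
      (if k = 1 then 1 else P k) * t ^ occCount r (w.drop k) = P k * t ^ occCount r (w.drop k) :=
    fun k hk => by rw [if_neg (by simp at hk; omega)]
  rw [if_neg hw, zero_add, filter_insert, if_pos hL, sum_insert (by simp; omega), if_pos rfl,
    one_mul, pow_occCount_eq_add_sum (by omega) h0 hP hw, hfilter, sum_congr rfl hite]
  refine congrArg _ (sum_subset (fun k hk => by simp at hk ⊢; omega) fun k hk hk' => ?_).symm
  simp only [mem_range, mem_Icc, not_and, not_le] at hk hk'
  rw [h0 k (by omega), zero_mul]

end PatternWeights

theorem patternGF_eq_wordSeries (r n : ℕ) :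
    patternGF r n = wordSeries fun w => (X : ℤ[X]) ^ occCount r w := by
  refine MvPowerSeries.ext fun d => ?_
  rw [coeff_wordSeries, MvPowerSeries.coeff_apply, patternGF, patternEnumerator,
    finsum_subtype_eq_finsum_cond (f := fun w : List (Fin n) => (X : ℤ[X]) ^ occCount r w)]
  refine finsum_cond_eq_sum_of_cond_iff _ fun {w} _ => ?_
  rw [Multiset.mem_lists_toFinset, Multiset.ext]
  simp

/-- (Theorem 2) `∑_m g_r(m;t) x^m = 1/(1 - e_1 - ∑_{k=r}^n P_k^{(r)}(t) e_k)`. -/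
theorem pattern_enumerator_gf (n r : ℕ) (hr : 2 ≤ r) (P : ℕ → Polynomial ℤ)
    (h0 : ∀ k, k < r → P k = 0)
    (hbase : P r = X - 1)
    (hrec : ∀ k, r < k → P k = (X - 1) * ∑ i ∈ Finset.Icc 1 (r - 1), P (k - i)) :
    patternGF r n *
      ((1 - MvPolynomial.esymm (Fin n) (Polynomial ℤ) 1 -
        ∑ k ∈ Finset.Icc r n,
          MvPolynomial.C (P k) * MvPolynomial.esymm (Fin n) (Polynomial ℤ) k :
        MvPolynomial (Fin n) (Polynomial ℤ)) : MvPowerSeries (Fin n) (Polynomial ℤ)) = 1 := by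
  have hpoly : (1 - MvPolynomial.esymm (Fin n) (Polynomial ℤ) 1 - ∑ k ∈ Finset.Icc r n,
      MvPolynomial.C (P k) * MvPolynomial.esymm (Fin n) (Polynomial ℤ) k :
        MvPolynomial (Fin n) (Polynomial ℤ)) = 1 - ∑ k ∈ insert 1 (Icc r n),
      MvPolynomial.C (if k = 1 then 1 else P k) * MvPolynomial.esymm (Fin n) (Polynomial ℤ) k := by
    have hIcc : ∀ k ∈ Icc r n, MvPolynomial.C (if k = 1 then 1 else P k)
        * MvPolynomial.esymm (Fin n) (Polynomial ℤ) k
        = MvPolynomial.C (P k) * MvPolynomial.esymm (Fin n) (Polynomial ℤ) k := fun k hk => by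
      rw [if_neg (by simp at hk; omega)]
    rw [sum_insert (by simp; omega), if_pos rfl, map_one, one_mul, sum_congr rfl hIcc, sub_sub]
  rw [patternGF_eq_wordSeries, hpoly]
  exact wordSeries_mul_eq_one _ _ _ fun w =>
    pow_occCount_eq_ite_add_sum hr h0 (eq_mul_ite_add_sum_of_rec h0 hbase hrec) w
      (w.firstRunLength_le_card.trans_eq (Fintype.card_fin n))
end

section
/- The generating function for words over the alphabet {1,2,3} avoiding the consecutive pattern 123 is 1/(1 - x_1 - x_2 - x_3 + x_1x_2x_3); in particular the number of such words with m_1 ones, m_2 twos, m_3 threes is the coefficient of x_1^{m_1}x_2^{m_2}x_3^{m_3} in this rational power series. -/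
/-- The number of words over `{1,2,3}` (encoded as `Fin 3`) with `m j`
occurrences of each letter `j`, avoiding the consecutive pattern `123`. -/
noncomputable def wordAvoidCount3 (m : Fin 3 → ℕ) : ℕ :=
  Nat.card {w : List (Fin 3) // (∀ j, w.count j = m j) ∧ AvoidsInc 3 w}

noncomputable def wordAvoidGF3 : MvPowerSeries (Fin 3) ℤ :=
  fun d => (wordAvoidCount3 ⇑d : ℤ)

/-!
Let `W` be the set of words over `{0, 1, 2}` without the factor `012`; over this alphabet a
strictly increasing factor of length three can only be `012`. A word `x :: t` with `t ∈ W`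
either lies in `W` or is `0 :: 1 :: 2 :: s` with `s ∈ W`, since `012` cannot overlap itself.
Hence `W ⊔ 012·W = {[]} ⊔ 0·W ⊔ 1·W ⊔ 2·W` as disjoint unions, and since prepending the letter
`i` multiplies a generating function by `X i`, the generating function `F` of `W` satisfies
`F + X₀X₁X₂ F = 1 + (X₀ + X₁ + X₂) F`.
-/

open MvPowerSeries

section WordGF

variable {α : Type*} [DecidableEq α]

def wordsWithCounts (d : α →₀ ℕ) : Set (List α) :=
  {w | Multiset.toFinsupp (w : Multiset α) = d}

theorem finite_wordsWithCounts (d : α →₀ ℕ) : (wordsWithCounts d).Finite :=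
  (Multiset.lists (Finsupp.toMultiset d)).finite_toSet.subset fun _ hw =>
    (Multiset.mem_lists_iff _ _).2 (Multiset.toFinsupp_eq_iff.1 hw).symm

theorem nil_mem_wordsWithCounts {d : α →₀ ℕ} : [] ∈ wordsWithCounts d ↔ d = 0 := by
  simp [wordsWithCounts, eq_comm]

theorem mem_wordsWithCounts {w : List α} {d : α →₀ ℕ} :
    w ∈ wordsWithCounts d ↔ ∀ a, w.count a = d a := by
  simp [wordsWithCounts, Finsupp.ext_iff]

theorem cons_mem_wordsWithCounts {a : α} {w : List α} {d : α →₀ ℕ} :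
    a :: w ∈ wordsWithCounts d ↔
      Finsupp.single a 1 ≤ d ∧ w ∈ wordsWithCounts (d - Finsupp.single a 1) := by
  simp only [wordsWithCounts, Set.mem_ofPred_eq, ← Multiset.cons_coe, ← Multiset.singleton_add,
    Multiset.toFinsupp_add, Multiset.toFinsupp_singleton]
  constructor
  · rintro rfl
    exact ⟨le_self_add, (add_tsub_cancel_left _ _).symm⟩
  · rintro ⟨hle, hw⟩
    rw [hw, add_tsub_cancel_of_le hle]

noncomputable def wordGF (S : Set (List α)) : MvPowerSeries α ℤ :=
  fun d => (S ∩ wordsWithCounts d).ncard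

theorem coeff_wordGF (S : Set (List α)) (d : α →₀ ℕ) :
    coeff d (wordGF S) = (S ∩ wordsWithCounts d).ncard := rfl

theorem wordGF_singleton_nil : wordGF ({[]} : Set (List α)) = 1 := by
  ext d
  rw [coeff_wordGF, coeff_one]
  split_ifs with hd
  · simp [Set.singleton_inter_of_mem (nil_mem_wordsWithCounts.2 hd)]
  · simp [Set.singleton_inter_eq_empty.2 (mt nil_mem_wordsWithCounts.1 hd)]

theorem wordGF_union {S T : Set (List α)} (h : Disjoint S T) :
    wordGF (S ∪ T) = wordGF S + wordGF T := by
  ext d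
  have hfin := finite_wordsWithCounts d
  rw [map_add, coeff_wordGF, coeff_wordGF, coeff_wordGF, Set.union_inter_distrib_right,
    Set.ncard_union_eq (h.mono Set.inter_subset_left Set.inter_subset_left)
      (hfin.inter_of_right _) (hfin.inter_of_right _), Nat.cast_add]

theorem wordGF_image_cons (a : α) (S : Set (List α)) :
    wordGF (List.cons a '' S) = X a * wordGF S := by
  ext d
  rw [X_def, coeff_monomial_mul, one_mul, coeff_wordGF, ← Set.image_inter_preimage,
    Set.ncard_image_of_injective _ List.cons_injective]
  split_ifs with hd
  · simp [coeff_wordGF, Set.preimage, cons_mem_wordsWithCounts, hd]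
  · simp [Set.preimage, cons_mem_wordsWithCounts, hd]

end WordGF

theorem disjoint_image_cons {α : Type*} {a b : α} (h : a ≠ b) (S T : Set (List α)) :
    Disjoint (List.cons a '' S) (List.cons b '' T) :=
  Set.disjoint_left.2 <| by
    rintro _ ⟨s, -, rfl⟩ ⟨t, -, ht⟩
    exact h (List.cons.inj ht).1.symm

def avoidingFactor {α : Type*} (p : List α) : Set (List α) := {w | ¬ p <:+: w}

@[simp]
theorem mem_avoidingFactor {α : Type*} {p w : List α} : w ∈ avoidingFactor p ↔ ¬ p <:+: w :=
  Iff.rfl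

theorem eq_zero_one_two_of_isChain_lt {l : List (Fin 3)} (hl : l.length = 3)
    (h : l.IsChain (· < ·)) : l = [0, 1, 2] := by
  match l, hl with
  | [a, b, c], _ =>
    simp only [List.isChain_cons_cons, List.isChain_singleton, and_true] at h
    revert a b c; decide

theorem avoidsInc_three_iff (w : List (Fin 3)) : AvoidsInc 3 w ↔ ¬ [0, 1, 2] <:+: w := by
  refine not_congr ⟨?_, fun h => ⟨_, h, rfl, ?_⟩⟩
  · rintro ⟨l, hlw, hl, hchain⟩
    rwa [← eq_zero_one_two_of_isChain_lt hl hchain]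
  · show List.IsChain _ _
    decide

open List in
theorem not_infix_zero_one_two_union_eq :
    (avoidingFactor [0, 1, 2] : Set (List (Fin 3))) ∪
        cons 0 '' (cons 1 '' (cons 2 '' avoidingFactor [0, 1, 2])) =
      {[]} ∪ cons 0 '' avoidingFactor [0, 1, 2] ∪ cons 1 '' avoidingFactor [0, 1, 2] ∪
        cons 2 '' avoidingFactor [0, 1, 2] := by
  ext (_ | ⟨x, t⟩)
  · simp
  · by_cases h12 : [1, 2] <+: t
    · obtain ⟨s, rfl⟩ := h12
      fin_cases x <;> simp [List.infix_cons_iff, List.cons_prefix_cons]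
    · fin_cases x <;> simp [h12, List.infix_cons_iff, List.cons_prefix_cons]
      rintro s - rfl
      exact absurd ⟨s, rfl⟩ h12

theorem wordAvoidGF3_eq_wordGF : wordAvoidGF3 = wordGF (avoidingFactor [0, 1, 2]) := by
  refine MvPowerSeries.ext fun d => ?_
  have hset : {w | (∀ j, w.count j = d j) ∧ AvoidsInc 3 w} =
      avoidingFactor [0, 1, 2] ∩ wordsWithCounts d := by
    ext w
    simp [mem_wordsWithCounts, avoidsInc_three_iff, and_comm]
  rw [coeff_wordGF, ← hset, ← Nat.card_coe_set_eq]
  rfl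

theorem wordGF_not_infix_zero_one_two :
    wordGF (avoidingFactor ([0, 1, 2] : List (Fin 3))) +
        X 0 * (X 1 * (X 2 * wordGF (avoidingFactor [0, 1, 2]))) =
      1 + X 0 * wordGF (avoidingFactor [0, 1, 2]) + X 1 * wordGF (avoidingFactor [0, 1, 2]) +
        X 2 * wordGF (avoidingFactor [0, 1, 2]) := by
  have h := congrArg wordGF not_infix_zero_one_two_union_eq
  rwa [wordGF_union, wordGF_union, wordGF_union, wordGF_union, wordGF_singleton_nil,
    wordGF_image_cons, wordGF_image_cons, wordGF_image_cons, wordGF_image_cons,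
    wordGF_image_cons] at h
  iterate 3 simp [disjoint_image_cons]
  · refine Set.disjoint_left.2 ?_
    rintro _ hw ⟨_, ⟨_, ⟨s, -, rfl⟩, rfl⟩, rfl⟩
    exact hw (List.prefix_append [0, 1, 2] s).isInfix

open MvPowerSeries in
/-- The generating function for words over `{1,2,3}` avoiding the consecutive
pattern `123` is `1/(1 - x₁ - x₂ - x₃ + x₁x₂x₃)`. -/
theorem words_avoiding_123_alphabet_three :
    wordAvoidGF3 *
      (1 - X 0 - X 1 - X 2 + X 0 * X 1 * X 2 : MvPowerSeries (Fin 3) ℤ) = 1 := by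
  rw [wordAvoidGF3_eq_wordGF]
  linear_combination wordGF_not_infix_zero_one_two
end
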